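/- arXiv:1601.01850 — 5 statements merged into one kernel-verified Lean document; each statement's English description precedes it below -/
import Mathlib

section
/- Let p : [0,+∞) → ℝ^ℓ be a Lebesgue measurable map that is c.u.d. mod 1, let I ⊆ [0,1)^ℓ be a box, and set W := {t ∈ [0,+∞) : {p(t)} ∈ I}. Then the Lebesgue integral of 1/t over W ∩ [1,+∞) is infinite, i.e. ∫_{W ∩ [1,+∞)} (1/t) dt = +∞. -/
open MeasureTheory Filter Set

/-- A box in `[0,1)^ℓ`: a product of intervals contained in `[0,1)`, each with
nonempty interior. -/
def IsBox {l : ℕ} (I : Set (Fin l → ℝ)) : Prop :=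
  ∃ J : Fin l → Set ℝ,
    (∀ i, J i ⊆ Set.Ico (0 : ℝ) 1) ∧
    (∀ i, (J i).OrdConnected) ∧
    (∀ i, (interior (J i)).Nonempty) ∧
    I = Set.univ.pi J

/-- `p : [0,∞) → ℝ^ℓ` is continuously uniformly distributed modulo 1:
for every box `I ⊆ [0,1)^ℓ`, `vol₁({t ∈ [0,T] : {p(t)} ∈ I}) / T → vol_ℓ(I)`
as `T → +∞`. -/
def IsCudModOne {l : ℕ} (p : ℝ → Fin l → ℝ) : Prop :=
  ∀ I : Set (Fin l → ℝ), IsBox I →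
    Tendsto
      (fun T : ℝ =>
        (volume {t : ℝ | t ∈ Set.Icc (0 : ℝ) T ∧ (fun i => Int.fract (p t i)) ∈ I}).toReal / T)
      atTop (nhds (volume I).toReal)

theorem stmt1 {l : ℕ} (p : ℝ → Fin l → ℝ) (hp : Measurable p) (hcud : IsCudModOne p)
    (I : Set (Fin l → ℝ)) (hI : IsBox I) :
    (∫⁻ t in ({t : ℝ | 0 ≤ t ∧ (fun i => Int.fract (p t i)) ∈ I} ∩ Set.Ici (1 : ℝ)),
        ENNReal.ofReal (1 / t)) = ⊤ := by
  obtain ⟨J, hJsub, hJconn, hJint, hIeq⟩ := hI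
  have hImeas : MeasurableSet I := by
    rw [hIeq]; exact MeasurableSet.univ_pi fun i => (hJconn i).measurableSet
  have hqmeas : Measurable (fun t => (fun i => Int.fract (p t i))) := by
    exact measurable_pi_lambda _ fun i => ((measurable_pi_apply i).comp hp).fract
  set A : Set ℝ := {t | (fun i => Int.fract (p t i)) ∈ I} with hA
  have hAmeas : MeasurableSet A := hqmeas hImeas
  -- volume of I is positive and finite
  have hvolI_pos : 0 < volume I := by
    rw [hIeq, volume_pi_pi]
    rw [CanonicallyOrderedAdd.prod_pos]
    intro i _
    exact lt_of_lt_of_le (isOpen_interior.measure_pos volume (hJint i))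
      (measure_mono interior_subset)
  have hvolI_lt_top : volume I < ⊤ := by
    have h1 : volume I ≤ volume (Set.univ.pi fun _ : Fin l => Set.Ico (0:ℝ) 1) := by
      rw [hIeq]; exact measure_mono (Set.pi_mono fun i _ => hJsub i)
    calc volume I ≤ _ := h1
      _ = ∏ _i : Fin l, volume (Set.Ico (0:ℝ) 1) := volume_pi_pi _
      _ < ⊤ := by simp [Real.volume_Ico]
  set c : ℝ := (volume I).toReal with hc
  have hcpos : 0 < c := ENNReal.toReal_pos hvolI_pos.ne' hvolI_lt_top.ne
  -- restate the cud hypothesis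
  have hset : ∀ T : ℝ, {t : ℝ | t ∈ Set.Icc (0:ℝ) T ∧ (fun i => Int.fract (p t i)) ∈ I}
      = A ∩ Set.Icc 0 T := by
    intro T; ext t; simp [hA, Set.mem_inter_iff, and_comm]
  have hT : Tendsto (fun T : ℝ => (volume (A ∩ Set.Icc 0 T)).toReal / T) atTop (nhds c) := by
    simpa only [hset] using hcud I ⟨J, hJsub, hJconn, hJint, hIeq⟩
  obtain ⟨N, hN⟩ := Metric.tendsto_atTop.mp hT (c/8) (by positivity)
  set T0 : ℝ := max N 1 with hT0
  have hT01 : (1:ℝ) ≤ T0 := le_max_right N 1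
  have hT0pos : (0:ℝ) < T0 := lt_of_lt_of_le one_pos hT01
  have hfin : ∀ S : Set ℝ, ∀ a b : ℝ, volume (S ∩ Set.Icc a b) ≠ ⊤ :=
    fun S a b => ne_top_of_le_ne_top measure_Icc_lt_top.ne
      (measure_mono Set.inter_subset_right)
  have hfinIoc : ∀ S : Set ℝ, ∀ a b : ℝ, volume (S ∩ Set.Ioc a b) ≠ ⊤ :=
    fun S a b => ne_top_of_le_ne_top measure_Ioc_lt_top.ne
      (measure_mono Set.inter_subset_right)
  -- key estimate on dyadic blocks
  have key : ∀ T : ℝ, T0 ≤ T →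
      ENNReal.ofReal (c/4) ≤ ∫⁻ t in A ∩ Set.Ioc T (2*T), ENNReal.ofReal (1/t) := by
    intro T hTT
    have hT1 : (1:ℝ) ≤ T := le_trans hT01 hTT
    have hTpos : (0:ℝ) < T := lt_of_lt_of_le one_pos hT1
    have h1 := hN T (le_trans (le_max_left N 1) hTT)
    have h2 := hN (2*T) (le_trans (le_max_left N 1) (hTT.trans (by linarith)))
    rw [Real.dist_eq, abs_lt] at h1 h2
    have hsplit : volume (A ∩ Set.Icc 0 T) + volume (A ∩ Set.Ioc T (2*T))
        = volume (A ∩ Set.Icc 0 (2*T)) := by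
      rw [← measure_union ?_ (hAmeas.inter measurableSet_Ioc),
        ← Set.inter_union_distrib_left, Set.Icc_union_Ioc_eq_Icc hTpos.le (by linarith)]
      exact Disjoint.mono Set.inter_subset_right Set.inter_subset_right
        (Set.disjoint_left.mpr fun t ht ht' => absurd ht.2 (not_le.mpr ht'.1))
    have htr : (volume (A ∩ Set.Icc 0 T)).toReal + (volume (A ∩ Set.Ioc T (2*T))).toReal
        = (volume (A ∩ Set.Icc 0 (2*T))).toReal := by
      rw [← ENNReal.toReal_add (hfin _ _ _) (hfinIoc _ _ _), hsplit]
    set m1 := (volume (A ∩ Set.Icc 0 T)).toReal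
    set m2 := (volume (A ∩ Set.Icc 0 (2*T))).toReal
    have hm1 : m1 < (c + c/8) * T := by
      have := h1.2
      have h' : m1 / T < c + c/8 := by linarith
      calc m1 = (m1 / T) * T := by field_simp
        _ < (c + c/8) * T := by
          exact mul_lt_mul_of_pos_right h' hTpos
    have hm2 : (c - c/8) * (2*T) < m2 := by
      have := h2.1
      have h' : c - c/8 < m2 / (2*T) := by linarith
      calc (c - c/8) * (2*T) < (m2 / (2*T)) * (2*T) := by
            exact mul_lt_mul_of_pos_right h' (by linarith)
        _ = m2 := by field_simp
    have hmB : c/2 * T ≤ (volume (A ∩ Set.Ioc T (2*T))).toReal := by nlinarith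
    calc ENNReal.ofReal (c/4)
        = ENNReal.ofReal (1/(2*T)) * ENNReal.ofReal (c/2 * T) := by
          rw [← ENNReal.ofReal_mul (by positivity)]
          congr 1
          field_simp
          ring
      _ ≤ ENNReal.ofReal (1/(2*T)) * volume (A ∩ Set.Ioc T (2*T)) := by
          refine mul_le_mul_right ?_ _
          rw [← ENNReal.ofReal_toReal (hfinIoc A T (2*T))]
          exact ENNReal.ofReal_le_ofReal hmB
      _ = ∫⁻ _ in A ∩ Set.Ioc T (2*T), ENNReal.ofReal (1/(2*T)) :=
          (setLIntegral_const _ _).symm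
      _ ≤ ∫⁻ t in A ∩ Set.Ioc T (2*T), ENNReal.ofReal (1/t) := by
          refine setLIntegral_mono' (hAmeas.inter measurableSet_Ioc) fun t ht => ?_
          exact ENNReal.ofReal_le_ofReal
            (one_div_le_one_div_of_le (lt_trans hTpos ht.2.1) ht.2.2)
  -- dyadic blocks
  set B : ℕ → Set ℝ := fun n => A ∩ Set.Ioc (T0 * 2^n) (T0 * 2^(n+1)) with hB
  have hBmeas : ∀ n, MeasurableSet (B n) := fun n => hAmeas.inter measurableSet_Ioc
  have hmono : ∀ m n : ℕ, m < n → Disjoint (B m) (B n) := by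
    intro m n hmn
    have hle : T0 * 2^(m+1) ≤ T0 * 2^n := by
      have : (2:ℝ)^(m+1) ≤ 2^n := pow_le_pow_right₀ one_le_two hmn
      nlinarith
    refine Disjoint.mono Set.inter_subset_right Set.inter_subset_right ?_
    exact Set.disjoint_left.mpr fun t ht ht' => absurd (ht.2.trans hle) (not_le.mpr ht'.1)
  have hdisj : Pairwise (Function.onFun Disjoint B) := by
    intro m n hmn
    rcases hmn.lt_or_gt with h | h
    · exact hmono m n h
    · exact (hmono n m h).symm
  have hsub : (⋃ n, B n) ⊆
      ({t : ℝ | 0 ≤ t ∧ (fun i => Int.fract (p t i)) ∈ I} ∩ Set.Ici (1 : ℝ)) := by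
    rintro t ht
    obtain ⟨n, htn⟩ := Set.mem_iUnion.mp ht
    have h1 : (1:ℝ) ≤ T0 * 2^n := by
      have : (1:ℝ) ≤ 2^n := one_le_pow₀ one_le_two
      nlinarith
    have ht1 : (1:ℝ) ≤ t := h1.trans htn.2.1.le
    exact ⟨⟨by linarith, htn.1⟩, ht1⟩
  refine top_le_iff.mp ?_
  calc (⊤ : ENNReal) = ∑' _ : ℕ, ENNReal.ofReal (c/4) :=
        (ENNReal.tsum_const_eq_top_of_ne_zero (by simp [ENNReal.ofReal_eq_zero]; linarith)).symm
    _ ≤ ∑' n, ∫⁻ t in B n, ENNReal.ofReal (1/t) := by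
        refine ENNReal.tsum_le_tsum fun n => ?_
        have h2 : T0 * 2^(n+1) = 2 * (T0 * 2^n) := by ring
        have hge : T0 ≤ T0 * 2^n := by
          have : (1:ℝ) ≤ 2^n := one_le_pow₀ one_le_two
          nlinarith
        have := key (T0 * 2^n) hge
        rwa [← h2] at this
    _ = ∫⁻ t in ⋃ n, B n, ENNReal.ofReal (1/t) := (lintegral_iUnion hBmeas hdisj _).symm
    _ ≤ ∫⁻ t in ({t : ℝ | 0 ≤ t ∧ (fun i => Int.fract (p t i)) ∈ I} ∩ Set.Ici (1 : ℝ)),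
        ENNReal.ofReal (1/t) := lintegral_mono_set hsub
end

section
/- Let n ≥ 1, let c₁,…,c_n ∈ ℂ ∖ {0}, and let p₁,…,p_n ∈ ℝ[t] be pairwise distinct polynomials with p_j(0) = 0 for all j, at least one of which is not the zero polynomial. Define f : ℝ → ℂ by f(t) = Σ_{j=1}^n c_j·e^{i p_j(t)}. Then there exist an integer ℓ with 1 ≤ ℓ ≤ n, polynomials q₁,…,q_ℓ ∈ ℝ[t] with q_k(0) = 0 that are linearly independent over ℚ (so that no nontrivial ℤ-linear combination of q₁,…,q_ℓ is a constant polynomial), a finite set S ⊆ ℤ^ℓ, and coefficients a_α ∈ ℂ ∖ {0} for α ∈ S, such that f(t) = Σ_{α∈S} a_α·e^{2πi(α₁q₁(t)+⋯+α_ℓ q_ℓ(t))} for all t ∈ ℝ, and moreover for each k ∈ {1,…,ℓ} the set S contains a tuple of the form ρ_k·e_k with ρ_k a positive integer (e_k the k-th standard basis vector of ℤ^ℓ); in particular S contains a nonzero tuple, so the associated Laurent polynomial Σ_{α∈S} a_α X^α is nonconstant. -/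
open Filter

theorem stmt2 (n : ℕ) (hn : 1 ≤ n) (c : Fin n → ℂ) (hc : ∀ j, c j ≠ 0)
    (p : Fin n → Polynomial ℝ) (hdist : Function.Injective p)
    (h0 : ∀ j, (p j).eval 0 = 0) (hne : ∃ j, p j ≠ 0) :
    ∃ l : ℕ, 1 ≤ l ∧ l ≤ n ∧
      ∃ q : Fin l → Polynomial ℝ,
        (∀ k, (q k).eval 0 = 0) ∧
        LinearIndependent ℚ q ∧
        ∃ (S : Finset (Fin l → ℤ)) (a : (Fin l → ℤ) → ℂ),
          (∀ α ∈ S, a α ≠ 0) ∧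
          (∀ t : ℝ,
            ∑ j, c j * Complex.exp (Complex.I * ((p j).eval t : ℝ)) =
              ∑ α ∈ S, a α *
                Complex.exp (2 * (Real.pi : ℂ) * Complex.I *
                  ((∑ k, (α k : ℝ) * (q k).eval t : ℝ) : ℂ))) ∧
          (∀ k : Fin l, ∃ ρ : ℕ, 0 < ρ ∧ (Pi.single k (ρ : ℤ)) ∈ S) := by
  classical
  obtain ⟨s, hs_sub, hs_span, hs_li⟩ := exists_linearIndependent ℚ (Set.range p)
  have hs_fin : s.Finite := (Set.finite_range p).subset hs_sub
  set l : ℕ := hs_fin.toFinset.card with hl_def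
  -- enumeration of s
  let e : Fin l ≃ hs_fin.toFinset := hs_fin.toFinset.equivFin.symm
  let q' : Fin l → Polynomial ℝ := fun k => (e k : Polynomial ℝ)
  have hq'mem : ∀ k, q' k ∈ s := fun k => hs_fin.mem_toFinset.mp (e k).2
  have hq'li : LinearIndependent ℚ q' := by
    have heq : q' = (fun x : s => (x : Polynomial ℝ)) ∘ (fun k => (⟨(e k : Polynomial ℝ), hq'mem k⟩ : s)) := rfl
    rw [heq]
    refine hs_li.comp _ (fun k₁ k₂ h => e.injective (Subtype.ext ?_))
    simpa [Subtype.ext_iff] using h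
  have hq'inj : Function.Injective q' := hq'li.injective
  have hrange : Set.range q' = s := by
    ext x
    constructor
    · rintro ⟨k, rfl⟩; exact hq'mem k
    · intro hx
      exact ⟨e.symm ⟨x, hs_fin.mem_toFinset.mpr hx⟩, by simp [q']⟩
  have hspan : ∀ j, p j ∈ Submodule.span ℚ (Set.range q') := by
    intro j
    rw [hrange, hs_span]
    exact Submodule.subset_span ⟨j, rfl⟩
  -- coefficients
  have hcoeff : ∀ j, ∃ r : Fin l → ℚ, ∑ k, r k • q' k = p j := by
    intro j
    exact (Submodule.mem_span_range_iff_exists_fun ℚ).mp (hspan j)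
  let r : Fin n → Fin l → ℚ := fun j =>
    if h : ∃ k, q' k = p j then Pi.single h.choose 1 else (hcoeff j).choose
  have hr : ∀ j, ∑ k, r j k • q' k = p j := by
    intro j
    by_cases h : ∃ k, q' k = p j
    · simp only [r, dif_pos h]
      rw [Finset.sum_eq_single h.choose]
      · rw [Pi.single_eq_same, one_smul, h.choose_spec]
      · intro k _ hk; rw [Pi.single_eq_of_ne hk, zero_smul]
      · intro hk; exact absurd (Finset.mem_univ _) hk
    · simp only [r, dif_neg h]
      exact (hcoeff j).choose_spec
  have hrsingle : ∀ j k, q' k = p j → r j = Pi.single k 1 := by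
    intro j k hk
    have h : ∃ k, q' k = p j := ⟨k, hk⟩
    have : h.choose = k := hq'inj (h.choose_spec.trans hk.symm)
    simp only [r, dif_pos h, this]
  -- common denominator
  set N : ℕ := ∏ j, ∏ k, (r j k).den with hN_def
  have hNpos : 0 < N := by
    apply Finset.prod_pos; intro j _
    apply Finset.prod_pos; intro k _
    exact (r j k).pos
  have hNd : ∀ j k, (r j k).den ∣ N := by
    intro j k
    exact dvd_trans (Finset.dvd_prod_of_mem (fun k => (r j k).den) (Finset.mem_univ k))
      (Finset.dvd_prod_of_mem (fun j => ∏ k, (r j k).den) (Finset.mem_univ j))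
  -- integer coefficients
  let A : Fin n → Fin l → ℤ := fun j k => ((N / (r j k).den : ℕ) : ℤ) * (r j k).num
  have hA : ∀ j k, ((A j k : ℚ)) = (N : ℚ) * r j k := by
    intro j k
    obtain ⟨m, hm⟩ := hNd j k
    have hden : ((r j k).den : ℚ) ≠ 0 := Nat.cast_ne_zero.mpr (r j k).den_nz
    have hnum : ((r j k).num : ℚ) = r j k * (r j k).den := by
      have h := Rat.num_div_den (r j k)
      exact (div_eq_iff hden).mp h
    have hdiv : N / (r j k).den = m := by
      rw [hm]; exact Nat.mul_div_cancel_left m (r j k).pos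
    simp only [A, Int.cast_mul, Int.cast_natCast, hnum]
    rw [hdiv, hm]
    push_cast
    ring
  -- A determines p via q'
  have hAr : ∀ j k, ((A j k : ℝ)) = (N : ℝ) * ((r j k : ℚ) : ℝ) := by
    intro j k
    exact_mod_cast congrArg (fun x : ℚ => (x : ℝ)) (hA j k)
  have hAinj : Function.Injective A := by
    intro j j' h
    apply hdist
    rw [← hr j, ← hr j']
    congr 1
    funext k
    have h1 : (N : ℚ) * r j k = (N : ℚ) * r j' k := by
      rw [← hA j k, ← hA j' k, congrFun h k]
    have hN0 : (N : ℚ) ≠ 0 := Nat.cast_ne_zero.mpr hNpos.ne'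
    have : r j k = r j' k := mul_left_cancel₀ hN0 h1
    rw [this]
  have hAsingle : ∀ j k, q' k = p j → A j = Pi.single k (N : ℤ) := by
    intro j k hk
    have hrj := hrsingle j k hk
    funext k'
    rcases eq_or_ne k' k with rfl | hne
    · have : ((A j k' : ℚ)) = (N : ℚ) := by
        rw [hA, hrj, Pi.single_eq_same, mul_one]
      have h2 : ((A j k' : ℚ)) = (((N : ℤ)) : ℚ) := by rw [this]; push_cast; ring
      rw [Pi.single_eq_same]
      exact_mod_cast h2
    · have : ((A j k' : ℚ)) = 0 := by
        rw [hA, hrj, Pi.single_eq_of_ne hne, mul_zero]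
      rw [Pi.single_eq_of_ne hne]
      exact_mod_cast this
  -- the scaled polynomials
  have hpi : (2 * Real.pi * N) ≠ 0 := by
    have := Real.pi_ne_zero
    have hN0 : (N : ℝ) ≠ 0 := Nat.cast_ne_zero.mpr hNpos.ne'
    positivity
  let q : Fin l → Polynomial ℝ := fun k => ((2 * Real.pi * N)⁻¹ : ℝ) • q' k
  have hq0 : ∀ k, (q k).eval 0 = 0 := by
    intro k
    obtain ⟨j, hj⟩ := hs_sub (hq'mem k)
    simp only [q, Polynomial.eval_smul, smul_eq_mul, ← hj, h0 j, mul_zero]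
  have hqli : LinearIndependent ℚ q := by
    have hc0 : ((2 * Real.pi * N)⁻¹ : ℝ) ≠ 0 := inv_ne_zero hpi
    let φ : Polynomial ℝ →ₗ[ℚ] Polynomial ℝ :=
      { toFun := fun x => ((2 * Real.pi * N)⁻¹ : ℝ) • x
        map_add' := fun x y => smul_add _ x y
        map_smul' := fun m x => by simpa using smul_comm ((2 * Real.pi * (N:ℝ))⁻¹) m x }
    have hφinj : Function.Injective φ := fun x y hxy =>
      smul_right_injective _ hc0 hxy
    exact (hq'li.map' φ (LinearMap.ker_eq_bot.mpr hφinj))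
  -- the key polynomial identity
  have hkey : ∀ j, p j = (2 * Real.pi) • ∑ k, (A j k : ℝ) • q k := by
    intro j
    rw [← hr j, Finset.smul_sum]
    refine Finset.sum_congr rfl fun k _ => ?_
    have h1 : r j k • q' k = ((r j k : ℝ)) • q' k := by
      rw [← ratCast_smul_eq ℚ ℝ (r j k) (q' k), Rat.cast_id]
    rw [h1]
    simp only [q, smul_smul]
    congr 1
    rw [hAr j k]
    field_simp
  -- evaluation identity
  have heval : ∀ j t, (p j).eval t = 2 * Real.pi * ∑ k, (A j k : ℝ) * (q k).eval t := by
    intro j t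
    conv_lhs => rw [hkey j]
    rw [Polynomial.eval_smul, smul_eq_mul, Polynomial.eval_finset_sum]
    congr 1
    refine Finset.sum_congr rfl fun k _ => ?_
    rw [Polynomial.eval_smul, smul_eq_mul]
  -- bounds on l
  have hl1 : 1 ≤ l := by
    rcases hne with ⟨j, hj⟩
    by_contra h
    have hl0 : l = 0 := by omega
    have hsempty : s = ∅ := by
      rw [← hs_fin.coe_toFinset, Finset.card_eq_zero.mp hl0, Finset.coe_empty]
    have hmem : p j ∈ Submodule.span ℚ s := hs_span ▸ Submodule.subset_span ⟨j, rfl⟩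
    rw [hsempty, Submodule.span_empty, Submodule.mem_bot] at hmem
    exact hj hmem
  have hln : l ≤ n := by
    have hg : ∀ k : Fin l, ∃ j, p j = q' k := fun k => hs_sub (hq'mem k)
    let g : Fin l → Fin n := fun k => (hg k).choose
    have hginj : Function.Injective g := by
      intro k₁ k₂ h
      apply hq'inj
      rw [← (hg k₁).choose_spec, ← (hg k₂).choose_spec]
      exact congrArg p h
    simpa using Fintype.card_le_of_injective g hginj
  refine ⟨l, hl1, hln, q, hq0, hqli, Finset.image A Finset.univ,
    fun α => if h : ∃ j, A j = α then c h.choose else 0, ?_, ?_, ?_⟩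
  · intro α hα
    obtain ⟨j, -, rfl⟩ := Finset.mem_image.mp hα
    have h : ∃ j', A j' = A j := ⟨j, rfl⟩
    simp only [dif_pos h]
    exact hc _
  · intro t
    rw [Finset.sum_image (fun j _ j' _ h => hAinj h)]
    refine Finset.sum_congr rfl fun j _ => ?_
    have h : ∃ j', A j' = A j := ⟨j, rfl⟩
    simp only [dif_pos h]
    rw [hAinj h.choose_spec]
    congr 1
    have h2 : (((p j).eval t : ℝ) : ℂ) =
        2 * (Real.pi : ℂ) * ((∑ k, (A j k : ℝ) * (q k).eval t : ℝ) : ℂ) := by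
      rw [heval j t]
      push_cast
      ring
    rw [h2, mul_left_comm, ← mul_assoc]
  · intro k
    obtain ⟨j, hj⟩ := hs_sub (hq'mem k)
    refine ⟨N, hNpos, ?_⟩
    rw [show (Pi.single k ((N : ℕ) : ℤ) : Fin l → ℤ) = A j from (hAsingle j k hj.symm).symm]
    exact Finset.mem_image.mpr ⟨j, Finset.mem_univ j, rfl⟩
end

section
/- Let J be a nonempty finite index set, let c_j ∈ ℂ ∖ {0} for j ∈ J, and let (p_j)_{j∈J} be pairwise distinct polynomials in ℝ[t] with p_j(0) = 0, at least one of which is not the zero polynomial. Define f : ℝ → ℂ by f(t) = Σ_{j∈J} c_j·e^{i p_j(t)}. Then there exist ε > 0 and two sequences (t_{0,n})_{n∈ℕ} and (t_{1,n})_{n∈ℕ} of real numbers, both tending to +∞, such that |f(t_{0,n}) − f(t_{1,n})| ≥ ε for every n ∈ ℕ. In particular, the limit of f(t) as t → +∞ does not exist. -/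
open Filter

open Filter Polynomial Complex intervalIntegral

noncomputable def ph (q : ℝ[X]) (t : ℝ) : ℂ := Complex.exp (Complex.I * (q.eval t : ℝ))

lemma ph_hasDerivAt (q : ℝ[X]) (t : ℝ) :
    HasDerivAt (ph q) (Complex.I * (q.derivative.eval t : ℝ) * ph q t) t := by
  have h1 : HasDerivAt (fun t : ℝ => ((q.eval t : ℝ) : ℂ)) ((q.derivative.eval t : ℝ) : ℂ) t :=
    (q.hasDerivAt t).ofReal_comp
  have h2 := (h1.const_mul Complex.I).cexp
  exact h2.congr_deriv (by simp only [ph]; ring)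

lemma ph_norm (q : ℝ[X]) (t : ℝ) : ‖ph q t‖ = 1 := by
  simp [ph, Complex.norm_exp]

lemma ph_cont (q : ℝ[X]) : Continuous (ph q) :=
  Complex.continuous_exp.comp (continuous_const.mul (Complex.continuous_ofReal.comp q.continuous))

lemma core_bound (q : ℝ[X]) (a : ℝ)
    (h1 : ∀ t, a ≤ t → 0 < q.derivative.eval t)
    (h2 : ∀ t, a ≤ t → 0 ≤ q.derivative.derivative.eval t) :
    ∀ T, a ≤ T → ‖∫ t in a..T, ph q t‖ ≤ 2 / q.derivative.eval a := by
  set r := q.derivative with hr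
  intro T hT
  have huIcc : Set.uIcc a T = Set.Icc a T := Set.uIcc_of_le hT
  set w : ℝ → ℂ := fun t => Complex.I * ((r.derivative.eval t : ℝ) : ℂ) / (((r.eval t : ℝ) : ℂ)) ^ 2 with hw
  set F : ℝ → ℂ := fun t => ph q t / (Complex.I * ((r.eval t : ℝ) : ℂ)) with hF
  have hrne : ∀ t ∈ Set.uIcc a T, ((r.eval t : ℝ) : ℂ) ≠ 0 := by
    intro t ht
    rw [huIcc] at ht
    exact_mod_cast (h1 t ht.1).ne'
  have hFderiv : ∀ t ∈ Set.uIcc a T, HasDerivAt F (ph q t + ph q t * w t) t := by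
    intro t ht
    have hne : ((r.eval t : ℝ) : ℂ) ≠ 0 := hrne t ht
    have hne2 : Complex.I * ((r.eval t : ℝ) : ℂ) ≠ 0 := mul_ne_zero Complex.I_ne_zero hne
    have hd2 : HasDerivAt (fun t : ℝ => Complex.I * ((r.eval t : ℝ) : ℂ))
        (Complex.I * ((r.derivative.eval t : ℝ) : ℂ)) t :=
      ((r.hasDerivAt t).ofReal_comp).const_mul Complex.I
    have hd4 := (ph_hasDerivAt q t).div hd2 hne2
    refine hd4.congr_deriv (Eq.symm ?_)
    rw [hw]
    field_simp
    ring_nf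
    have h3 : (Complex.I : ℂ) ^ 3 = -Complex.I := by
      rw [pow_succ, Complex.I_sq]; ring
    rw [Complex.I_sq, ← hr]
    ring
  have hcont1 : ContinuousOn (fun t => ph q t + ph q t * w t) (Set.uIcc a T) := by
    apply ((ph_cont q).continuousOn).add
    apply ((ph_cont q).continuousOn).mul
    apply ContinuousOn.div
    · exact (continuous_const.mul (Complex.continuous_ofReal.comp r.derivative.continuous)).continuousOn
    · exact ((Complex.continuous_ofReal.comp r.continuous).pow 2).continuousOn
    · intro t ht; exact pow_ne_zero 2 (hrne t ht)
  have hcontw : ContinuousOn (fun t => ph q t * w t) (Set.uIcc a T) := by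
    apply ((ph_cont q).continuousOn).mul
    apply ContinuousOn.div
    · exact (continuous_const.mul (Complex.continuous_ofReal.comp r.derivative.continuous)).continuousOn
    · exact ((Complex.continuous_ofReal.comp r.continuous).pow 2).continuousOn
    · intro t ht; exact pow_ne_zero 2 (hrne t ht)
  have key1 : ∫ t in a..T, (ph q t + ph q t * w t) = F T - F a :=
    integral_eq_sub_of_hasDerivAt hFderiv (hcont1.intervalIntegrable)
  have key2 : ∫ t in a..T, ph q t = (F T - F a) - ∫ t in a..T, ph q t * w t := by
    rw [← key1, integral_add ((ph_cont q).intervalIntegrable a T) hcontw.intervalIntegrable]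
    ring
  -- real integral of r'/r^2
  have key4 : ∫ t in a..T, r.derivative.eval t / (r.eval t) ^ 2
      = (r.eval a)⁻¹ - (r.eval T)⁻¹ := by
    have hg : ∀ t ∈ Set.uIcc a T, HasDerivAt (fun t => -(r.eval t)⁻¹)
        (r.derivative.eval t / (r.eval t) ^ 2) t := by
      intro t ht
      rw [huIcc] at ht
      have := ((r.hasDerivAt t).inv (h1 t ht.1).ne').neg
      refine this.congr_deriv ?_
      ring
    have hcont : ContinuousOn (fun t => r.derivative.eval t / (r.eval t) ^ 2) (Set.uIcc a T) := by
      apply ContinuousOn.div (r.derivative.continuous.continuousOn)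
        ((r.continuous.pow 2).continuousOn)
      intro t ht
      rw [huIcc] at ht
      exact pow_ne_zero 2 (h1 t ht.1).ne'
    rw [integral_eq_sub_of_hasDerivAt hg hcont.intervalIntegrable]
    ring
  have key3 : ‖∫ t in a..T, ph q t * w t‖ ≤ (r.eval a)⁻¹ - (r.eval T)⁻¹ := by
    rw [← key4]
    refine (norm_integral_le_integral_norm hT).trans_eq ?_
    apply integral_congr
    intro t ht
    rw [huIcc] at ht
    have h1t := h1 t ht.1
    have h2t := h2 t ht.1
    show ‖ph q t * w t‖ = r.derivative.eval t / (r.eval t) ^ 2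
    rw [norm_mul, ph_norm, one_mul, hw]
    simp only [norm_div, norm_mul, Complex.norm_I, one_mul, norm_pow,
      Complex.norm_real, Real.norm_eq_abs]
    rw [_root_.abs_of_nonneg h2t, _root_.abs_of_pos h1t]
  have hFnorm : ∀ t, a ≤ t → ‖F t‖ = (r.eval t)⁻¹ := by
    intro t ht
    have hp := ph_norm q t
    rw [hF]
    simp only [norm_div, norm_mul, Complex.norm_I, one_mul,
      Complex.norm_real, Real.norm_eq_abs]
    rw [hp, _root_.abs_of_pos (h1 t ht), one_div]
  rw [key2]
  have hb1 : ‖F T - F a - ∫ t in a..T, ph q t * w t‖ ≤ ‖F T‖ + ‖F a‖ + ((r.eval a)⁻¹ - (r.eval T)⁻¹) := by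
    refine (norm_sub_le _ _).trans ?_
    gcongr
    exact (norm_sub_le _ _)
  refine hb1.trans ?_
  rw [hFnorm T hT, hFnorm a le_rfl]
  rw [div_eq_mul_inv]
  ring_nf
  exact le_rfl

lemma ev_pos (P : ℝ[X]) (h0 : P ≠ 0) (h : 0 < P.leadingCoeff) :
    ∀ᶠ x in atTop, 0 < P.eval x := by
  by_cases hd : 0 < P.degree
  · exact (P.tendsto_atTop_of_leadingCoeff_nonneg hd h.le).eventually_gt_atTop 0
  · have : P.natDegree = 0 := by
      rw [Polynomial.natDegree_eq_zero_iff_degree_le_zero]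
      exact not_lt.mp hd
    obtain ⟨A, rfl⟩ := Polynomial.natDegree_eq_zero.mp this
    simp only [Polynomial.leadingCoeff_C] at h
    filter_upwards with x
    simpa using h

lemma lead_deriv (P : ℝ[X]) (hd : 0 < P.natDegree) (h : 0 < P.leadingCoeff) :
    P.derivative ≠ 0 ∧ 0 < P.derivative.leadingCoeff ∧
      P.derivative.natDegree = P.natDegree - 1 := by
  have hdeg : P.derivative.degree = ((P.natDegree - 1 : ℕ) : WithBot ℕ) :=
    Polynomial.degree_derivative_eq P hd
  have hne : P.derivative ≠ 0 := by
    intro hzero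
    rw [hzero, Polynomial.degree_zero] at hdeg
    exact (WithBot.bot_ne_coe) hdeg
  have hnd : P.derivative.natDegree = P.natDegree - 1 :=
    Polynomial.natDegree_eq_of_degree_eq_some hdeg
  refine ⟨hne, ?_, hnd⟩
  have : P.derivative.leadingCoeff = P.leadingCoeff * (((P.natDegree - 1 : ℕ) : ℝ) + 1) := by
    rw [Polynomial.leadingCoeff, hnd, Polynomial.coeff_derivative, Nat.sub_add_cancel hd,
      ← Polynomial.leadingCoeff]
  rw [this]
  apply mul_pos h
  positivity

lemma ev_both (P : ℝ[X]) (hd : 0 < P.natDegree) (hl : 0 < P.leadingCoeff) :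
    ∀ᶠ x in atTop, 0 < P.derivative.eval x ∧ 0 ≤ P.derivative.derivative.eval x := by
  obtain ⟨hne, hlc, hnd⟩ := lead_deriv P hd hl
  have h1 := ev_pos P.derivative hne hlc
  have h2 : ∀ᶠ x in atTop, 0 ≤ P.derivative.derivative.eval x := by
    by_cases hdd : 0 < P.derivative.natDegree
    · obtain ⟨hne2, hlc2, _⟩ := lead_deriv P.derivative hdd hlc
      filter_upwards [ev_pos P.derivative.derivative hne2 hlc2] with x hx using hx.le
    · obtain ⟨A, hA⟩ := Polynomial.natDegree_eq_zero.mp (Nat.eq_zero_of_not_pos hdd)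
      filter_upwards with x
      rw [← hA]
      simp
  filter_upwards [h1, h2] with x hx1 hx2 using ⟨hx1, hx2⟩

lemma osc_pos (q : ℝ[X]) (h : 0 < q.natDegree) (hl : 0 < q.leadingCoeff) :
    ∃ C, ∀ᶠ T in atTop, ‖∫ t in (0:ℝ)..T, ph q t‖ ≤ C := by
  obtain ⟨a, ha⟩ := (ev_both q h hl).exists_forall_of_atTop
  refine ⟨‖∫ t in (0:ℝ)..a, ph q t‖ + 2 / q.derivative.eval a, ?_⟩
  filter_upwards [eventually_ge_atTop a] with T hT
  have hsplit : ∫ t in (0:ℝ)..T, ph q t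
      = (∫ t in (0:ℝ)..a, ph q t) + ∫ t in a..T, ph q t :=
    (intervalIntegral.integral_add_adjacent_intervals
      ((ph_cont q).intervalIntegrable 0 a) ((ph_cont q).intervalIntegrable a T)).symm
  rw [hsplit]
  refine (norm_add_le _ _).trans ?_
  gcongr
  exact core_bound q a (fun t ht => (ha t ht).1) (fun t ht => (ha t ht).2) T hT

lemma iic_conj (g : ℝ → ℂ) (a b : ℝ) :
    ∫ t in a..b, (starRingEnd ℂ) (g t) = (starRingEnd ℂ) (∫ t in a..b, g t) := by
  unfold intervalIntegral
  rw [map_sub, integral_conj, integral_conj]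

lemma ph_neg (q : ℝ[X]) (t : ℝ) : ph (-q) t = (starRingEnd ℂ) (ph q t) := by
  rw [ph, ph, ← Complex.exp_conj]
  congr 1
  simp

lemma osc (q : ℝ[X]) (h : 0 < q.natDegree) :
    ∃ C, ∀ᶠ T in atTop, ‖∫ t in (0:ℝ)..T, ph q t‖ ≤ C := by
  have hq0 : q ≠ 0 := fun hq => by simp [hq] at h
  rcases lt_or_gt_of_ne (Polynomial.leadingCoeff_ne_zero.mpr hq0).symm with hl | hl
  · exact osc_pos q h hl
  · -- leadingCoeff < 0
    have h' : 0 < (-q).natDegree := by rwa [Polynomial.natDegree_neg]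
    have hl' : 0 < (-q).leadingCoeff := by rw [Polynomial.leadingCoeff_neg]; linarith
    obtain ⟨C, hC⟩ := osc_pos (-q) h' hl'
    refine ⟨C, ?_⟩
    filter_upwards [hC] with T hT
    have : ∫ t in (0:ℝ)..T, ph (-q) t = (starRingEnd ℂ) (∫ t in (0:ℝ)..T, ph q t) := by
      rw [← iic_conj]
      exact intervalIntegral.integral_congr fun t _ => ph_neg q t
    rw [this] at hT
    simpa using hT

lemma cesaro_zero (q : ℝ[X]) (h : 0 < q.natDegree) :
    Tendsto (fun T : ℝ => (∫ t in (0:ℝ)..T, ph q t) / T) atTop (nhds 0) := by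
  obtain ⟨C, hC⟩ := osc q h
  have hlim : Tendsto (fun T : ℝ => C / T) atTop (nhds 0) :=
    tendsto_const_nhds.div_atTop tendsto_id
  refine squeeze_zero_norm' ?_ hlim
  filter_upwards [hC, eventually_gt_atTop 0] with T hT hT0
  rw [norm_div, Complex.norm_real, Real.norm_eq_abs, _root_.abs_of_pos hT0]
  gcongr

lemma cesaro_one :
    Tendsto (fun T : ℝ => (∫ t in (0:ℝ)..T, ph 0 t) / T) atTop (nhds 1) := by
  have hph : ∀ t : ℝ, ph 0 t = 1 := by intro t; simp [ph]
  apply Tendsto.congr' (f₁ := fun _ => (1:ℂ))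
  · filter_upwards [eventually_gt_atTop (0:ℝ)] with T hT
    have hTC : (T : ℂ) ≠ 0 := by exact_mod_cast hT.ne'
    rw [intervalIntegral.integral_congr (g := fun _ => (1:ℂ)) (fun t _ => hph t),
      intervalIntegral.integral_const]
    rw [sub_zero, Complex.real_smul, mul_one, div_self hTC]
  · exact tendsto_const_nhds

lemma cesaro_lim (g : ℝ → ℂ) (hg : Continuous g) (M : ℂ) (h : Tendsto g atTop (nhds M)) :
    Tendsto (fun T : ℝ => (∫ t in (0:ℝ)..T, g t) / T) atTop (nhds M) := by
  rw [Metric.tendsto_nhds]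
  intro ε hε
  have h2 : ∀ᶠ t in atTop, ‖g t - M‖ ≤ ε / 2 := by
    filter_upwards [Metric.tendsto_nhds.mp h (ε/2) (by positivity)] with t ht
    rw [dist_eq_norm] at ht; exact ht.le
  obtain ⟨A0, hA0⟩ := h2.exists_forall_of_atTop
  set A : ℝ := max A0 0 with hAdef
  have hA : ∀ b ≥ A, ‖g b - M‖ ≤ ε / 2 := fun b hb => hA0 b (le_trans (le_max_left _ _) hb)
  have hApos : (0:ℝ) ≤ A := le_max_right _ _
  set K := ‖∫ t in (0:ℝ)..A, (g t - M)‖ with hK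
  have hK0 : 0 ≤ K := norm_nonneg _
  filter_upwards [eventually_ge_atTop A, eventually_gt_atTop (0:ℝ),
    eventually_gt_atTop (2 * K / ε)] with T hTA hT0 hTK
  rw [dist_eq_norm]
  have hsub : (∫ t in (0:ℝ)..T, g t) / T - M = (∫ t in (0:ℝ)..T, (g t - M)) / T := by
    rw [intervalIntegral.integral_sub (hg.intervalIntegrable 0 T)
      (intervalIntegrable_const), intervalIntegral.integral_const]
    have hTC : (T : ℂ) ≠ 0 := by exact_mod_cast hT0.ne'
    rw [sub_zero, Complex.real_smul, sub_div, mul_comm, mul_div_assoc, div_self hTC, mul_one]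
  rw [hsub]
  have hsplit : ∫ t in (0:ℝ)..T, (g t - M)
      = (∫ t in (0:ℝ)..A, (g t - M)) + ∫ t in A..T, (g t - M) :=
    (intervalIntegral.integral_add_adjacent_intervals
      ((hg.sub continuous_const).intervalIntegrable 0 A)
      ((hg.sub continuous_const).intervalIntegrable A T)).symm
  have htail : ‖∫ t in A..T, (g t - M)‖ ≤ ε / 2 * |T - A| := by
    apply intervalIntegral.norm_integral_le_of_norm_le_const
    intro x hx
    rw [Set.uIoc_of_le hTA] at hx
    exact hA x hx.1.le
  have hbound : ‖∫ t in (0:ℝ)..T, (g t - M)‖ ≤ K + ε / 2 * (T - A) := by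
    rw [hsplit]
    refine (norm_add_le _ _).trans ?_
    rw [_root_.abs_of_nonneg (by linarith : (0:ℝ) ≤ T - A)] at htail
    exact add_le_add le_rfl htail
  rw [norm_div, Complex.norm_real, Real.norm_eq_abs, _root_.abs_of_pos hT0]
  have h3 : (K + ε / 2 * (T - A)) / T < ε := by
    rw [div_lt_iff₀ hT0]
    have h4 : K < ε / 2 * T := by
      rw [div_lt_iff₀ hε] at hTK
      nlinarith
    nlinarith
  calc ‖∫ t in (0:ℝ)..T, (g t - M)‖ / T ≤ (K + ε / 2 * (T - A)) / T := by
        gcongr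
      _ < ε := h3

lemma cesaro_pair (q : ℝ[X]) (hq : q.eval 0 = 0) :
    Tendsto (fun T : ℝ => (∫ t in (0:ℝ)..T, ph q t) / T) atTop
      (nhds (if q = 0 then 1 else 0)) := by
  by_cases h : q = 0
  · subst h; simpa using cesaro_one
  · have hdeg : 0 < q.natDegree := by
      rcases Nat.eq_zero_or_pos q.natDegree with h' | h'
      · obtain ⟨A, rfl⟩ := Polynomial.natDegree_eq_zero.mp h'
        simp only [Polynomial.eval_C] at hq
        subst hq
        simp at h
      · exact h'
    simp only [if_neg h]
    exact cesaro_zero q hdeg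

lemma no_limit {J : Type} [Fintype J] [Nonempty J] (c : J → ℂ) (hc : ∀ j, c j ≠ 0)
    (p : J → Polynomial ℝ) (hdist : Function.Injective p)
    (h0 : ∀ j, (p j).eval 0 = 0) (hne : ∃ j, p j ≠ 0)
    (f : ℝ → ℂ)
    (hf : ∀ t : ℝ, f t = ∑ j, c j * Complex.exp (Complex.I * ((p j).eval t : ℝ))) :
    ¬ ∃ L : ℂ, Tendsto f atTop (nhds L) := by
  classical
  rintro ⟨L, hL⟩
  have hf' : ∀ t, f t = ∑ j, c j * ph (p j) t := fun t => hf t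
  have hfc : Continuous f := by
    have hcs : Continuous (fun t => ∑ j, c j * ph (p j) t) :=
      continuous_finset_sum _ fun j _ => continuous_const.mul (ph_cont (p j))
    exact hcs.congr fun t => (hf' t).symm
  set d : J → ℂ := fun j => if p j = 0 then 1 else 0 with hd
  -- Step 1: Cesàro mean of f
  have hstep1 : Tendsto (fun T : ℝ => (∫ t in (0:ℝ)..T, f t) / T) atTop
      (nhds (∑ j, c j * d j)) := by
    have heq : (fun T : ℝ => ∑ j, c j * ((∫ t in (0:ℝ)..T, ph (p j) t) / T))
        =ᶠ[atTop] (fun T : ℝ => (∫ t in (0:ℝ)..T, f t) / T) := by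
      filter_upwards with T
      rw [intervalIntegral.integral_congr (g := fun t => ∑ j, c j * ph (p j) t)
        (fun t _ => hf' t),
        intervalIntegral.integral_finset_sum (f := fun j t => c j * ph (p j) t)
          (fun j _ => (continuous_const.mul (ph_cont (p j))).intervalIntegrable 0 T),
        Finset.sum_div]
      apply Finset.sum_congr rfl
      intro j _
      rw [intervalIntegral.integral_const_mul, mul_div_assoc]
    exact (tendsto_finset_sum _
      (fun j _ => (cesaro_pair (p j) (h0 j)).const_mul (c j))).congr' heq
  have hL1 : L = ∑ j, c j * d j :=
    tendsto_nhds_unique (cesaro_lim f hfc L hL) hstep1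
  -- Step 2: Cesàro mean of |f|^2
  set g : ℝ → ℂ := fun t => f t * (starRingEnd ℂ) (f t) with hg
  have hgc : Continuous g := hfc.mul (Complex.continuous_conj.comp hfc)
  have hgL : Tendsto g atTop (nhds (L * (starRingEnd ℂ) L)) :=
    hL.mul ((Complex.continuous_conj.tendsto L).comp hL)
  have hphmul : ∀ (j k : J) (t : ℝ),
      ph (p j) t * (starRingEnd ℂ) (ph (p k) t) = ph (p j - p k) t := by
    intro j k t
    rw [ph, ph, ph, ← Complex.exp_conj, ← Complex.exp_add]
    congr 1
    rw [Polynomial.eval_sub]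
    push_cast
    simp only [map_mul, Complex.conj_I, Complex.conj_ofReal]
    ring
  have hgexp : ∀ t, g t = ∑ j, ∑ k, (c j * (starRingEnd ℂ) (c k)) * ph (p j - p k) t := by
    intro t
    rw [hg]
    simp only
    rw [hf' t, map_sum, Finset.sum_mul_sum]
    apply Finset.sum_congr rfl; intro j _
    apply Finset.sum_congr rfl; intro k _
    rw [map_mul, ← hphmul j k t]
    ring
  have hstep2 : Tendsto (fun T : ℝ => (∫ t in (0:ℝ)..T, g t) / T) atTop
      (nhds (∑ j, ∑ k, (c j * (starRingEnd ℂ) (c k)) *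
        (if p j - p k = 0 then 1 else 0))) := by
    have heq : (fun T : ℝ => ∑ j, ∑ k, (c j * (starRingEnd ℂ) (c k)) *
        ((∫ t in (0:ℝ)..T, ph (p j - p k) t) / T))
        =ᶠ[atTop] (fun T : ℝ => (∫ t in (0:ℝ)..T, g t) / T) := by
      filter_upwards with T
      rw [intervalIntegral.integral_congr
        (g := fun t => ∑ j, ∑ k, (c j * (starRingEnd ℂ) (c k)) * ph (p j - p k) t)
        (fun t _ => hgexp t),
        intervalIntegral.integral_finset_sum
          (fun j _ => (Continuous.intervalIntegrable (by
            exact continuous_finset_sum _ fun k _ =>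
              continuous_const.mul (ph_cont (p j - p k))) 0 T)),
        Finset.sum_div]
      apply Finset.sum_congr rfl
      intro j _
      rw [intervalIntegral.integral_finset_sum
          (f := fun k t => (c j * (starRingEnd ℂ) (c k)) * ph (p j - p k) t)
          (fun k _ => (continuous_const.mul (ph_cont (p j - p k))).intervalIntegrable 0 T),
        Finset.sum_div]
      apply Finset.sum_congr rfl
      intro k _
      rw [intervalIntegral.integral_const_mul, mul_div_assoc]
    refine (tendsto_finset_sum _ (fun j _ => tendsto_finset_sum _ (fun k _ => ?_))).congr' heq
    exact (cesaro_pair (p j - p k) (by simp [h0 j, h0 k])).const_mul _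
  have hL2 : L * (starRingEnd ℂ) L = ∑ j, ∑ k, (c j * (starRingEnd ℂ) (c k)) *
      (if p j - p k = 0 then 1 else 0) :=
    tendsto_nhds_unique (cesaro_lim g hgc _ hgL) hstep2
  -- simplify the double sum to the diagonal
  have hdiagsum : (∑ j, ∑ k, (c j * (starRingEnd ℂ) (c k)) *
      (if p j - p k = 0 then 1 else 0)) = ∑ j, c j * (starRingEnd ℂ) (c j) := by
    apply Finset.sum_congr rfl
    intro j _
    have : ∀ k, (c j * (starRingEnd ℂ) (c k)) * (if p j - p k = 0 then (1:ℂ) else 0)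
        = if k = j then c j * (starRingEnd ℂ) (c k) else 0 := by
      intro k
      by_cases hk : k = j
      · subst hk; simp
      · have : p j - p k ≠ 0 := by
          rw [sub_ne_zero]
          exact fun hpk => hk (hdist hpk.symm)
        simp [this, hk]
    rw [Finset.sum_congr rfl (fun k _ => this k), Finset.sum_ite_eq' Finset.univ j]
    simp
  rw [hdiagsum] at hL2
  -- to real: normSq identity
  have hreal : Complex.normSq L = ∑ j, Complex.normSq (c j) := by
    have : ((Complex.normSq L : ℝ) : ℂ) = ((∑ j, Complex.normSq (c j) : ℝ) : ℂ) := by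
      rw [← Complex.mul_conj, hL2]
      push_cast
      apply Finset.sum_congr rfl
      intro j _
      rw [← Complex.mul_conj]
    exact_mod_cast this
  -- case analysis
  by_cases hex : ∃ j0, p j0 = 0
  · obtain ⟨j0, hj0⟩ := hex
    have hdj : ∀ j, c j * d j = if j = j0 then c j else 0 := by
      intro j
      by_cases hj : j = j0
      · subst hj; simp [hd, hj0]
      · have : p j ≠ 0 := fun h => hj (hdist (h.trans hj0.symm))
        simp [hd, this, hj]
    have hLval : L = c j0 := by
      rw [hL1, Finset.sum_congr rfl (fun j _ => hdj j), Finset.sum_ite_eq' Finset.univ j0]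
      simp
    obtain ⟨j1, hj1⟩ := hne
    have hj10 : j1 ≠ j0 := fun h => hj1 (h ▸ hj0)
    have hpair : Complex.normSq (c j0) + Complex.normSq (c j1) ≤ ∑ j, Complex.normSq (c j) := by
      have hsub : ({j0, j1} : Finset J) ⊆ Finset.univ := Finset.subset_univ _
      have := Finset.sum_le_sum_of_subset_of_nonneg hsub
        (fun j _ _ => Complex.normSq_nonneg (c j))
      rwa [Finset.sum_pair (Ne.symm hj10)] at this
    have h1pos : 0 < Complex.normSq (c j1) := Complex.normSq_pos.mpr (hc j1)
    rw [hLval] at hreal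
    linarith
  · push_neg at hex
    have hdj : ∀ j, c j * d j = 0 := by
      intro j; simp [hd, hex j]
    have hLval : L = 0 := by
      rw [hL1, Finset.sum_congr rfl (fun j _ => hdj j), Finset.sum_const_zero]
    have hpos : 0 < ∑ j, Complex.normSq (c j) :=
      Finset.sum_pos (fun j _ => Complex.normSq_pos.mpr (hc j)) Finset.univ_nonempty
    rw [hLval] at hreal
    simp at hreal
    linarith

theorem stmt3 {J : Type} [Fintype J] [Nonempty J] (c : J → ℂ) (hc : ∀ j, c j ≠ 0)
    (p : J → Polynomial ℝ) (hdist : Function.Injective p)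
    (h0 : ∀ j, (p j).eval 0 = 0) (hne : ∃ j, p j ≠ 0)
    (f : ℝ → ℂ)
    (hf : ∀ t : ℝ, f t = ∑ j, c j * Complex.exp (Complex.I * ((p j).eval t : ℝ))) :
    (∃ ε > (0 : ℝ), ∃ t₀ t₁ : ℕ → ℝ,
      Tendsto t₀ atTop atTop ∧ Tendsto t₁ atTop atTop ∧
      ∀ n : ℕ, ε ≤ ‖f (t₀ n) - f (t₁ n)‖) ∧
    ¬ ∃ L : ℂ, Tendsto f atTop (nhds L) := by
  classical
  have hnl : ¬ ∃ L : ℂ, Tendsto f atTop (nhds L) := no_limit c hc p hdist h0 hne f hf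
  refine ⟨?_, hnl⟩
  -- f is bounded
  set R : ℝ := ∑ j, ‖c j‖ with hR
  have hbdd : ∀ t, f t ∈ Metric.closedBall (0:ℂ) R := by
    intro t
    rw [Metric.mem_closedBall, dist_zero_right, hf]
    refine (norm_sum_le _ _).trans ?_
    apply Finset.sum_le_sum
    intro j _
    rw [norm_mul]
    have h1 : ‖Complex.exp (Complex.I * ((p j).eval t : ℝ))‖ = 1 := ph_norm (p j) t
    rw [h1, mul_one]
  have hcomp : IsCompact (Metric.closedBall (0:ℂ) R) := isCompact_closedBall _ _
  have hle : map f atTop ≤ 𝓟 (Metric.closedBall (0:ℂ) R) :=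
    le_principal_iff.mpr (mem_map.mpr (Eventually.of_forall hbdd))
  obtain ⟨a, _, ha⟩ := hcomp.exists_clusterPt hle
  have hnt : ¬ Tendsto f atTop (nhds a) := fun h => hnl ⟨a, h⟩
  obtain ⟨r, hr, hfreq⟩ : ∃ r > (0:ℝ), ∃ᶠ t in atTop, r ≤ dist (f t) a := by
    by_contra hcon
    push_neg at hcon
    apply hnt
    rw [Metric.tendsto_nhds]
    intro ε hε
    have h2 := hcon ε hε
    filter_upwards [h2] with t ht
    exact ht
  set K : Set ℂ := Metric.closedBall (0:ℂ) R ∩ {z | r ≤ dist z a} with hKdef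
  have hKclosed : IsClosed {z : ℂ | r ≤ dist z a} :=
    isClosed_le continuous_const (continuous_id.dist continuous_const)
  have hKcomp : IsCompact K := hcomp.inter_right hKclosed
  have hKne : NeBot (map f atTop ⊓ 𝓟 K) := by
    rw [inf_principal_neBot_iff]
    intro U hU
    rw [mem_map, mem_atTop_sets] at hU
    obtain ⟨T, hT⟩ := hU
    obtain ⟨t, htT, htr⟩ := frequently_atTop.mp hfreq T
    exact ⟨f t, hT t htT, hbdd t, htr⟩
  obtain ⟨b, hbK, hb⟩ := hKcomp.exists_clusterPt (inf_le_right (a := map f atTop))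
  have hbcl : ClusterPt b (map f atTop) := hb.of_inf_left
  have hab : r ≤ dist b a := hbK.2
  have haf : ∀ n : ℕ, ∃ t ≥ (n:ℝ), dist (f t) a < r/4 := by
    intro n
    have hfa : ∃ᶠ t in atTop, f t ∈ Metric.ball a (r/4) :=
      mapClusterPt_iff_frequently.mp ha (Metric.ball a (r/4)) (Metric.ball_mem_nhds _ (by positivity))
    obtain ⟨t, htn, htm⟩ := frequently_atTop.mp hfa n
    exact ⟨t, htn, Metric.mem_ball.mp htm⟩
  have hbf : ∀ n : ℕ, ∃ t ≥ (n:ℝ), dist (f t) b < r/4 := by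
    intro n
    have hfb : ∃ᶠ t in atTop, f t ∈ Metric.ball b (r/4) :=
      mapClusterPt_iff_frequently.mp hbcl (Metric.ball b (r/4)) (Metric.ball_mem_nhds _ (by positivity))
    obtain ⟨t, htn, htm⟩ := frequently_atTop.mp hfb n
    exact ⟨t, htn, Metric.mem_ball.mp htm⟩
  choose t₀ ht₀ hft₀ using haf
  choose t₁ ht₁ hft₁ using hbf
  refine ⟨r/2, by positivity, t₀, t₁, ?_, ?_, ?_⟩
  · exact tendsto_atTop_mono ht₀ tendsto_natCast_atTop_atTop
  · exact tendsto_atTop_mono ht₁ tendsto_natCast_atTop_atTop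
  · intro n
    have h1 := hft₀ n
    have h2 := hft₁ n
    have habs : ‖f (t₀ n) - f (t₁ n)‖ = dist (f (t₀ n)) (f (t₁ n)) := by
      rw [dist_eq_norm]
    rw [habs]
    have htri : dist b a ≤ dist b (f (t₁ n)) + dist (f (t₁ n)) (f (t₀ n)) + dist (f (t₀ n)) a :=
      dist_triangle4 b (f (t₁ n)) (f (t₀ n)) a
    rw [dist_comm b (f (t₁ n))] at htri
    rw [dist_comm (f (t₀ n)) (f (t₁ n))]
    linarith [hab]
end

section
/- Let J be a nonempty finite index set, let c_j ∈ ℂ ∖ {0} for j ∈ J, and let (p_j)_{j∈J} be pairwise distinct polynomials in ℝ[t] with p_j(0) = 0. Define f : ℝ → ℂ by f(t) = Σ_{j∈J} c_j·e^{i p_j(t)}. Then the limit of f(t) as t → +∞ exists (in ℂ) if and only if p_j is the zero polynomial for every j ∈ J, equivalently if and only if f is a constant function. -/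
open Filter Polynomial intervalIntegral

noncomputable def eI (q : Polynomial ℝ) : ℝ → ℂ := fun t => Complex.exp (Complex.I * (q.eval t : ℝ))

lemma eI_cont (q : Polynomial ℝ) : Continuous (eI q) :=
  Complex.continuous_exp.comp (continuous_const.mul (Complex.continuous_ofReal.comp q.continuous))

lemma eI_norm (q : Polynomial ℝ) (t : ℝ) : ‖eI q t‖ = 1 := by
  simp [eI, Complex.norm_exp, Complex.mul_re]

lemma eI_abs (q : Polynomial ℝ) (t : ℝ) : ‖eI q t‖ = 1 := eI_norm q t

lemma hasDerivAt_eI (q : Polynomial ℝ) (t : ℝ) :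
    HasDerivAt (eI q) (eI q t * (Complex.I * ((q.derivative.eval t : ℝ) : ℂ))) t := by
  have h1 : HasDerivAt (fun t : ℝ => ((q.eval t : ℝ) : ℂ)) ((q.derivative.eval t : ℝ) : ℂ) t :=
    (q.hasDerivAt t).ofReal_comp
  exact (h1.const_mul Complex.I).cexp

lemma poly_ev_abs_ge (r : Polynomial ℝ) (hr : r ≠ 0) :
    ∃ c > 0, ∀ᶠ t in atTop, c ≤ |r.eval t| := by
  rcases lt_or_ge 0 r.degree with h | h
  · exact ⟨1, one_pos, (r.abs_tendsto_atTop h).eventually_ge_atTop 1⟩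
  · have hC : r = Polynomial.C (r.coeff 0) := r.eq_C_of_degree_le_zero h
    have h0 : r.coeff 0 ≠ 0 := fun hz => hr (by rw [hC, hz, map_zero])
    exact ⟨|r.coeff 0|, abs_pos.2 h0, Eventually.of_forall fun t => by
      rw [hC]; simp⟩

lemma poly_ev_sign (r : Polynomial ℝ) :
    ∃ s : ℝ, |s| = 1 ∧ ∀ᶠ t in atTop, |r.eval t| = s * r.eval t := by
  have key : (∀ᶠ t in atTop, 0 ≤ r.eval t) ∨ (∀ᶠ t in atTop, r.eval t ≤ 0) := by
    rcases le_or_gt r.degree 0 with h | h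
    · have hC : r = Polynomial.C (r.coeff 0) := r.eq_C_of_degree_le_zero h
      rcases le_total 0 (r.coeff 0) with h0 | h0
      · exact Or.inl (Eventually.of_forall fun t => by rw [hC]; simpa)
      · exact Or.inr (Eventually.of_forall fun t => by rw [hC]; simpa)
    · rcases le_total 0 r.leadingCoeff with hl | hl
      · exact Or.inl ((r.tendsto_atTop_of_leadingCoeff_nonneg h hl).eventually_ge_atTop 0)
      · exact Or.inr ((r.tendsto_atBot_of_leadingCoeff_nonpos h hl).eventually_le_atBot 0)
  rcases key with h | h
  · exact ⟨1, abs_one, h.mono fun t ht => by rw [abs_of_nonneg ht, one_mul]⟩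
  · exact ⟨-1, by simp, h.mono fun t ht => by rw [abs_of_nonpos ht]; ring⟩


lemma osc_bound (q : Polynomial ℝ) (hq : 0 < q.degree) :
    ∃ C : ℝ, ∃ T0 : ℝ, 0 ≤ T0 ∧ ∀ T, T0 ≤ T → ‖∫ t in (0:ℝ)..T, eI q t‖ ≤ C := by
  set q1 := q.derivative with hq1def
  set q2 := q1.derivative with hq2def
  have hq1ne : q1 ≠ 0 := by
    intro h
    have h1 := Polynomial.natDegree_eq_zero_of_derivative_eq_zero h
    have h2 := Polynomial.natDegree_pos_iff_degree_pos.2 hq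
    omega
  obtain ⟨c, hcpos, hcev⟩ := poly_ev_abs_ge q1 hq1ne
  obtain ⟨s, hs1, hsev⟩ := poly_ev_sign q2
  obtain ⟨T0', hT0'⟩ := eventually_atTop.1 (hcev.and hsev)
  set T0 := max T0' 0 with hT0def
  have hT00 : (0:ℝ) ≤ T0 := le_max_right _ _
  have hge : ∀ t, T0 ≤ t → c ≤ |q1.eval t| ∧ |q2.eval t| = s * q2.eval t :=
    fun t ht => hT0' t ((le_max_left _ _).trans ht)
  have hne : ∀ t, T0 ≤ t → q1.eval t ≠ 0 := by
    intro t ht h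
    have := (hge t ht).1
    rw [h, abs_zero] at this
    exact absurd (hcpos.trans_le this) (lt_irrefl 0)
  have hneC : ∀ t, T0 ≤ t → (Complex.I * ((q1.eval t : ℝ) : ℂ)) ≠ 0 := by
    intro t ht
    simp [Complex.I_ne_zero, Complex.ofReal_eq_zero, hne t ht]
  -- auxiliary functions
  set F : ℝ → ℂ := fun t => eI q t / (Complex.I * ((q1.eval t : ℝ) : ℂ)) with hFdef
  set h : ℝ → ℂ :=
    fun t => eI q t * ((Complex.I * ((q2.eval t : ℝ) : ℂ)) / (Complex.I * ((q1.eval t : ℝ) : ℂ)) ^ 2)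
    with hhdef
  set G : ℝ → ℝ := fun t => -(q1.eval t)⁻¹ with hGdef
  set φ : ℝ → ℝ := fun t => q2.eval t / (q1.eval t) ^ 2 with hφdef
  have hFd : ∀ t, T0 ≤ t → HasDerivAt F (eI q t - h t) t := by
    intro t ht
    have hu := hasDerivAt_eI q t
    have hvin : HasDerivAt (fun t : ℝ => Complex.I * ((q1.eval t : ℝ) : ℂ))
        (Complex.I * ((q2.eval t : ℝ) : ℂ)) t := ((q1.hasDerivAt t).ofReal_comp).const_mul _
    have hD := hneC t ht
    have := hu.div hvin hD
    refine this.congr_deriv ?_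
    simp only [hhdef, ← hq1def]
    field_simp [Complex.ofReal_ne_zero.2 (hne t ht)]
  have hGd : ∀ t, T0 ≤ t → HasDerivAt G (φ t) t := by
    intro t ht
    have := ((q1.hasDerivAt t).inv (hne t ht)).neg
    refine this.congr_deriv ?_
    simp [hφdef]
    ring
  have hFnorm : ∀ t, T0 ≤ t → ‖F t‖ ≤ c⁻¹ := by
    intro t ht
    rw [hFdef]
    simp only [norm_div, eI_abs, norm_mul, Complex.norm_I, one_mul,
      Complex.norm_real, Real.norm_eq_abs, one_div]
    exact inv_anti₀ hcpos (hge t ht).1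
  have hGnorm : ∀ t, T0 ≤ t → |G t| ≤ c⁻¹ := by
    intro t ht
    rw [hGdef]
    simp only [abs_neg, abs_inv]
    exact inv_anti₀ hcpos (hge t ht).1
  refine ⟨T0 + c⁻¹ + c⁻¹ + (c⁻¹ + c⁻¹), T0, hT00, fun T hT => ?_⟩
  -- continuity facts on [T0, T]
  have huIcc : Set.uIcc T0 T = Set.Icc T0 T := Set.uIcc_of_le hT
  have hmemge : ∀ t ∈ Set.uIcc T0 T, T0 ≤ t := by
    intro t htmem
    rw [huIcc] at htmem
    exact htmem.1
  have hcont_h : ContinuousOn h (Set.uIcc T0 T) := by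
    apply ContinuousOn.mul (eI_cont q).continuousOn
    apply ContinuousOn.div
    · exact (continuous_const.mul (Complex.continuous_ofReal.comp q2.continuous)).continuousOn
    · exact ((continuous_const.mul (Complex.continuous_ofReal.comp q1.continuous)).pow 2).continuousOn
    · intro t htmem
      exact pow_ne_zero 2 (hneC t (hmemge t htmem))
  have hcont_φ : ContinuousOn φ (Set.uIcc T0 T) := by
    apply ContinuousOn.div q2.continuous.continuousOn (q1.continuous.pow 2).continuousOn
    intro t htmem
    exact pow_ne_zero 2 (hne t (hmemge t htmem))
  have hint_eI : ∀ a b : ℝ, IntervalIntegrable (eI q) MeasureTheory.volume a b :=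
    fun a b => (eI_cont q).intervalIntegrable a b
  have hint_h : IntervalIntegrable h MeasureTheory.volume T0 T := hcont_h.intervalIntegrable
  have hint_φ : IntervalIntegrable φ MeasureTheory.volume T0 T := hcont_φ.intervalIntegrable
  -- FTC
  have hFTC : ∫ t in T0..T, (eI q t - h t) = F T - F T0 :=
    integral_eq_sub_of_hasDerivAt (fun t htmem => hFd t (hmemge t htmem))
      ((hint_eI T0 T).sub hint_h)
  have hsplit : ∫ t in T0..T, (eI q t - h t) = (∫ t in T0..T, eI q t) - ∫ t in T0..T, h t :=
    integral_sub (hint_eI T0 T) hint_h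
  have hmid : (∫ t in T0..T, eI q t) = F T - F T0 + ∫ t in T0..T, h t := by
    rw [← hFTC, hsplit]; ring
  have hGFTC : ∫ t in T0..T, φ t = G T - G T0 :=
    integral_eq_sub_of_hasDerivAt (fun t htmem => hGd t (hmemge t htmem)) hint_φ
  -- bound on ∫ h
  have hnorm_h : ∀ t, T0 ≤ t → ‖h t‖ = s * φ t := by
    intro t ht
    have h2 := (hge t ht).2
    rw [hhdef]
    simp only [norm_mul, norm_div, norm_pow, eI_abs,
      Complex.norm_I, one_mul, Complex.norm_real, Real.norm_eq_abs, sq_abs]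
    show |q2.eval t| / (q1.eval t) ^ 2 = s * (q2.eval t / (q1.eval t) ^ 2)
    rw [← mul_div_assoc, ← h2]
  have hinth_bound : ‖∫ t in T0..T, h t‖ ≤ c⁻¹ + c⁻¹ := by
    calc ‖∫ t in T0..T, h t‖ ≤ ∫ t in T0..T, ‖h t‖ := norm_integral_le_integral_norm hT
      _ = ∫ t in T0..T, s * φ t := by
          apply integral_congr
          intro t htmem
          exact hnorm_h t (hmemge t htmem)
      _ = s * (G T - G T0) := by rw [integral_const_mul, hGFTC]
      _ ≤ |s * (G T - G T0)| := le_abs_self _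
      _ = |G T - G T0| := by rw [abs_mul, hs1, one_mul]
      _ ≤ |G T| + |G T0| := abs_sub _ _
      _ ≤ c⁻¹ + c⁻¹ := add_le_add (hGnorm T (le_trans (le_refl _) hT)) (hGnorm T0 le_rfl)
  -- bound on ∫_0^T0
  have hhead : ‖∫ t in (0:ℝ)..T0, eI q t‖ ≤ T0 := by
    have := norm_integral_le_of_norm_le_const (a := 0) (b := T0) (C := 1)
      (f := eI q) (fun t _ => le_of_eq (eI_norm q t))
    rwa [one_mul, sub_zero, abs_of_nonneg hT00] at this
  have hjoin : (∫ t in (0:ℝ)..T0, eI q t) + (∫ t in T0..T, eI q t) = ∫ t in (0:ℝ)..T, eI q t :=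
    integral_add_adjacent_intervals (hint_eI 0 T0) (hint_eI T0 T)
  calc ‖∫ t in (0:ℝ)..T, eI q t‖
      = ‖(∫ t in (0:ℝ)..T0, eI q t) + (F T - F T0 + ∫ t in T0..T, h t)‖ := by
        rw [← hjoin, hmid]
    _ ≤ ‖∫ t in (0:ℝ)..T0, eI q t‖ + (‖F T - F T0‖ + ‖∫ t in T0..T, h t‖) := by
        refine (norm_add_le _ _).trans (add_le_add le_rfl (norm_add_le _ _))
    _ ≤ T0 + ((‖F T‖ + ‖F T0‖) + (c⁻¹ + c⁻¹)) := by
        refine add_le_add hhead (add_le_add ((norm_sub_le _ _).trans le_rfl) hinth_bound)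
    _ ≤ T0 + ((c⁻¹ + c⁻¹) + (c⁻¹ + c⁻¹)) := by
        refine add_le_add le_rfl (add_le_add (add_le_add (hFnorm T hT) (hFnorm T0 le_rfl)) le_rfl)
    _ = T0 + c⁻¹ + c⁻¹ + (c⁻¹ + c⁻¹) := by ring

lemma mean_eI (q : Polynomial ℝ) (h0 : q.eval 0 = 0) :
    Tendsto (fun T : ℝ => (∫ t in (0:ℝ)..T, eI q t) / (T : ℂ)) atTop
      (nhds (if q = 0 then 1 else 0)) := by
  by_cases hz : q = 0
  · rw [if_pos hz]
    have : ∀ᶠ T in (atTop : Filter ℝ), (∫ t in (0:ℝ)..T, eI q t) / (T : ℂ) = 1 := by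
      filter_upwards [Ici_mem_atTop (1:ℝ)] with T hT
      have hT1 : (1:ℝ) ≤ T := hT
      have hTne : (T:ℂ) ≠ 0 := by
        simp only [ne_eq, Complex.ofReal_eq_zero]
        linarith
      have : eI q = fun _ => (1:ℂ) := by
        funext t; simp [eI, hz]
      rw [this, intervalIntegral.integral_const, sub_zero]
      rw [Complex.real_smul, mul_one, div_self hTne]
    exact Tendsto.congr' (this.mono fun T hT => hT.symm) tendsto_const_nhds
  · rw [if_neg hz]
    have hdeg : 0 < q.degree := by
      rcases lt_or_ge 0 q.degree with h | h
      · exact h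
      · exfalso
        have hC : q = Polynomial.C (q.coeff 0) := q.eq_C_of_degree_le_zero h
        have : q.coeff 0 = 0 := by
          have := h0; rwa [Polynomial.coeff_zero_eq_eval_zero]
        exact hz (by rw [hC, this, map_zero])
    obtain ⟨C, T0, hT00, hC⟩ := osc_bound q hdeg
    have hlim : Tendsto (fun T : ℝ => C / T) atTop (nhds 0) :=
      tendsto_const_nhds.div_atTop tendsto_id
    apply squeeze_zero_norm' _ hlim
    filter_upwards [Ici_mem_atTop (max T0 1)] with T hT
    have hT0le : T0 ≤ T := le_trans (le_max_left _ _) hT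
    have hTpos : (0:ℝ) < T := lt_of_lt_of_le one_pos (le_trans (le_max_right _ _) hT)
    rw [norm_div, Complex.norm_real, Real.norm_eq_abs, abs_of_pos hTpos]
    gcongr
    exact hC T hT0le

lemma cesaro_integral {g : ℝ → ℂ} (hg : Continuous g) {L : ℂ} (h : Tendsto g atTop (nhds L)) :
    Tendsto (fun T : ℝ => (∫ t in (0:ℝ)..T, g t) / (T : ℂ)) atTop (nhds L) := by
  rw [Metric.tendsto_nhds]
  intro ε hε
  have hev : ∀ᶠ t in (atTop : Filter ℝ), ‖g t - L‖ ≤ ε / 3 := by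
    have := Metric.tendsto_nhds.1 h (ε/3) (by linarith)
    filter_upwards [this] with t ht
    rw [dist_eq_norm] at ht
    exact ht.le
  obtain ⟨T0', hT0'⟩ := eventually_atTop.1 hev
  set T0 := max T0' 0 with hT0def
  have hT00 : (0:ℝ) ≤ T0 := le_max_right _ _
  have hbd : ∀ t, T0 ≤ t → ‖g t - L‖ ≤ ε / 3 := fun t ht => hT0' t ((le_max_left _ _).trans ht)
  set M := ‖∫ t in (0:ℝ)..T0, (g t - L)‖ with hMdef
  have hint : ∀ a b : ℝ, IntervalIntegrable (fun t => g t - L) MeasureTheory.volume a b :=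
    fun a b => (hg.sub continuous_const).intervalIntegrable a b
  filter_upwards [Ici_mem_atTop (max T0 (max 1 (3 * M / ε)))] with T hT
  have hTT0 : T0 ≤ T := le_trans (le_max_left _ _) hT
  have hT1 : (1:ℝ) ≤ T := le_trans ((le_max_left _ _).trans (le_max_right _ _)) hT
  have hTM : 3 * M / ε ≤ T := le_trans ((le_max_right _ _).trans (le_max_right _ _)) hT
  have hTpos : (0:ℝ) < T := lt_of_lt_of_le one_pos hT1
  have hTne : (T:ℂ) ≠ 0 := by simp [ne_eq, Complex.ofReal_eq_zero]; linarith
  -- rewrite the distance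
  have key : (∫ t in (0:ℝ)..T, g t) / (T:ℂ) - L = (∫ t in (0:ℝ)..T, (g t - L)) / (T:ℂ) := by
    rw [intervalIntegral.integral_sub (hg.intervalIntegrable 0 T)
      (intervalIntegrable_const), intervalIntegral.integral_const, sub_zero, sub_div]
    congr 1
    rw [Complex.real_smul, mul_comm, mul_div_assoc, div_self hTne, mul_one]
  rw [dist_eq_norm, key]
  -- split integral
  have hsplit : (∫ t in (0:ℝ)..T, (g t - L)) =
      (∫ t in (0:ℝ)..T0, (g t - L)) + ∫ t in T0..T, (g t - L) :=
    (intervalIntegral.integral_add_adjacent_intervals (hint 0 T0) (hint T0 T)).symm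
  have htail : ‖∫ t in T0..T, (g t - L)‖ ≤ ε / 3 * |T - T0| := by
    apply intervalIntegral.norm_integral_le_of_norm_le_const
    intro t ht
    rw [Set.uIoc_of_le hTT0] at ht
    exact hbd t ht.1.le
  have hM : M ≤ ε / 3 * T := by
    rw [div_le_iff₀ (by linarith : (0:ℝ) < ε)] at hTM
    nlinarith
  have htail' : ‖∫ t in T0..T, (g t - L)‖ ≤ ε / 3 * T := by
    refine htail.trans ?_
    rw [abs_of_nonneg (by linarith : (0:ℝ) ≤ T - T0)]
    nlinarith
  have hnum : ‖∫ t in (0:ℝ)..T, (g t - L)‖ ≤ ε / 3 * T + ε / 3 * T := by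
    rw [hsplit]
    exact (norm_add_le _ _).trans (add_le_add hM htail')
  rw [norm_div, Complex.norm_real, Real.norm_eq_abs, abs_of_pos hTpos]
  rw [div_lt_iff₀ hTpos]
  calc ‖∫ t in (0:ℝ)..T, (g t - L)‖ ≤ ε / 3 * T + ε / 3 * T := hnum
    _ < ε * T := by nlinarith

lemma eI_mul_conj (q r : Polynomial ℝ) (t : ℝ) :
    eI q t * (starRingEnd ℂ) (eI r t) = eI (q - r) t := by
  simp only [eI, ← Complex.exp_conj, map_mul, Complex.conj_I, Complex.conj_ofReal]
  rw [← Complex.exp_add]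
  congr 1
  push_cast [Polynomial.eval_sub]
  ring

lemma mean_sum {ι : Type} [Fintype ι] (a : ι → ℂ) (qs : ι → Polynomial ℝ)
    (h0 : ∀ j, (qs j).eval 0 = 0) :
    Tendsto (fun T : ℝ => (∫ t in (0:ℝ)..T, ∑ j, a j * eI (qs j) t) / (T : ℂ)) atTop
      (nhds (∑ j, a j * if qs j = 0 then 1 else 0)) := by
  have heq : ∀ T : ℝ, (∫ t in (0:ℝ)..T, ∑ j, a j * eI (qs j) t) / (T : ℂ)
      = ∑ j, a j * ((∫ t in (0:ℝ)..T, eI (qs j) t) / (T : ℂ)) := by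
    intro T
    rw [intervalIntegral.integral_finset_sum (f := fun j t => a j * eI (qs j) t)
      (fun j _ => (continuous_const.mul (eI_cont (qs j))).intervalIntegrable 0 T)]
    rw [Finset.sum_div]
    congr 1
    funext j
    rw [intervalIntegral.integral_const_mul, mul_div_assoc]
  have := tendsto_finset_sum Finset.univ
    (fun j (_ : j ∈ Finset.univ) => (mean_eI (qs j) (h0 j)).const_mul (a j))
  exact (this.congr fun T => (heq T).symm)

theorem stmt4 {J : Type} [Fintype J] [Nonempty J] (c : J → ℂ) (hc : ∀ j, c j ≠ 0)
    (p : J → Polynomial ℝ) (hdist : Function.Injective p)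
    (h0 : ∀ j, (p j).eval 0 = 0)
    (f : ℝ → ℂ)
    (hf : ∀ t : ℝ, f t = ∑ j, c j * Complex.exp (Complex.I * ((p j).eval t : ℝ))) :
    ((∃ L : ℂ, Tendsto f atTop (nhds L)) ↔ ∀ j, p j = 0) ∧
    ((∀ j, p j = 0) ↔ ∃ k : ℂ, ∀ t : ℝ, f t = k) := by
  have hfeI : ∀ t : ℝ, f t = ∑ j, c j * eI (p j) t := hf
  have hfc : Continuous f :=
    (continuous_finset_sum _ fun j _ => continuous_const.mul (eI_cont (p j))).congr
      fun t => (hfeI t).symm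
  classical
  have main : (∃ L : ℂ, Tendsto f atTop (nhds L)) → ∀ j, p j = 0 := by
    rintro ⟨L, hL⟩
    -- first moment
    have h1 : Tendsto (fun T : ℝ => (∫ t in (0:ℝ)..T, f t) / (T : ℂ)) atTop (nhds L) :=
      cesaro_integral hfc hL
    have h2 : Tendsto (fun T : ℝ => (∫ t in (0:ℝ)..T, f t) / (T : ℂ)) atTop
        (nhds (∑ j, c j * if p j = 0 then 1 else 0)) := by
      apply (mean_sum c p h0).congr
      intro T
      congr 1
      exact (intervalIntegral.integral_congr fun t _ => (hfeI t).symm)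
    have hLval : L = ∑ j, c j * if p j = 0 then 1 else 0 := tendsto_nhds_unique h1 h2
    -- second moment
    set g : ℝ → ℂ := fun t => f t * (starRingEnd ℂ) (f t) with hgdef
    have hgc : Continuous g := hfc.mul (Complex.continuous_conj.comp hfc)
    have hgL : Tendsto g atTop (nhds (L * (starRingEnd ℂ) L)) :=
      hL.mul ((Complex.continuous_conj.tendsto L).comp hL)
    have hgeq : ∀ t : ℝ, g t
        = ∑ jl : J × J, (c jl.1 * (starRingEnd ℂ) (c jl.2)) * eI (p jl.1 - p jl.2) t := by
      intro t
      rw [hgdef]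
      simp only
      rw [hfeI t, map_sum, Finset.sum_mul_sum]
      conv_rhs => rw [Fintype.sum_prod_type]
      apply Finset.sum_congr rfl
      intro j _
      apply Finset.sum_congr rfl
      intro l _
      rw [← eI_mul_conj (p j) (p l) t, map_mul]
      ring
    have h3 : Tendsto (fun T : ℝ => (∫ t in (0:ℝ)..T, g t) / (T : ℂ)) atTop
        (nhds (L * (starRingEnd ℂ) L)) := cesaro_integral hgc hgL
    have h4 : Tendsto (fun T : ℝ => (∫ t in (0:ℝ)..T, g t) / (T : ℂ)) atTop
        (nhds (∑ jl : J × J, (c jl.1 * (starRingEnd ℂ) (c jl.2))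
          * if p jl.1 - p jl.2 = 0 then 1 else 0)) := by
      apply (mean_sum (fun jl : J × J => c jl.1 * (starRingEnd ℂ) (c jl.2))
        (fun jl : J × J => p jl.1 - p jl.2)
        (fun jl => by simp [Polynomial.eval_sub, h0 jl.1, h0 jl.2])).congr
      intro T
      congr 1
      exact (intervalIntegral.integral_congr fun t _ => (hgeq t).symm)
    have hL2val : L * (starRingEnd ℂ) L
        = ∑ jl : J × J, (c jl.1 * (starRingEnd ℂ) (c jl.2)) * if p jl.1 - p jl.2 = 0 then 1 else 0 :=
      tendsto_nhds_unique h3 h4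
    -- simplify second moment sum to diagonal
    have hdiag : (∑ jl : J × J, (c jl.1 * (starRingEnd ℂ) (c jl.2))
        * if p jl.1 - p jl.2 = 0 then 1 else 0) = ∑ j, (Complex.normSq (c j) : ℂ) := by
      rw [Fintype.sum_prod_type]
      apply Finset.sum_congr rfl
      intro j _
      have : ∀ l : J, (c j * (starRingEnd ℂ) (c l)) * (if p j - p l = 0 then 1 else 0)
          = if l = j then (Complex.normSq (c j) : ℂ) else 0 := by
        intro l
        by_cases h : l = j
        · subst h
          simp [Complex.mul_conj]
        · have hne : p j - p l ≠ 0 := sub_ne_zero.2 (fun hh => h (hdist hh.symm))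
          simp [h, hne]
      simp only [this, Finset.sum_ite_eq', Finset.mem_univ, if_pos]
    rw [hdiag] at hL2val
    -- now case on existence of a zero polynomial
    by_cases hex : ∃ j0, p j0 = 0
    · obtain ⟨j0, hj0⟩ := hex
      have hLc : L = c j0 := by
        rw [hLval]
        have : ∀ j : J, (c j * if p j = 0 then 1 else 0) = if j = j0 then c j0 else 0 := by
          intro j
          by_cases h : j = j0
          · subst h; simp [hj0]
          · have : p j ≠ 0 := fun hh => h (hdist (hh.trans hj0.symm))
            simp [h, this]
        simp only [this, Finset.sum_ite_eq', Finset.mem_univ, if_pos]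
      -- real equation
      have hreal : Complex.normSq (c j0) = ∑ j, Complex.normSq (c j) := by
        have : ((Complex.normSq (c j0) : ℝ) : ℂ) = ((∑ j, Complex.normSq (c j) : ℝ) : ℂ) := by
          rw [hLc, Complex.mul_conj] at hL2val
          rw [hL2val]
          push_cast
          rfl
        exact_mod_cast this
      have hzero : ∀ j ∈ Finset.univ.erase j0, Complex.normSq (c j) = 0 := by
        have hsum : ∑ j ∈ Finset.univ.erase j0, Complex.normSq (c j) = 0 := by
          have := Finset.add_sum_erase Finset.univ (fun j => Complex.normSq (c j))
            (Finset.mem_univ j0)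
          rw [← hreal] at this
          linarith [this]
        intro j hj
        exact (Finset.sum_eq_zero_iff_of_nonneg
          (fun i _ => Complex.normSq_nonneg (c i))).1 hsum j hj
      intro j
      by_cases h : j = j0
      · subst h; exact hj0
      · exact absurd (Complex.normSq_eq_zero.1
          (hzero j (Finset.mem_erase.2 ⟨h, Finset.mem_univ j⟩))) (hc j)
    · exfalso
      have hLz : L = 0 := by
        rw [hLval]
        apply Finset.sum_eq_zero
        intro j _
        have : p j ≠ 0 := fun hh => hex ⟨j, hh⟩
        simp [this]
      rw [hLz, zero_mul] at hL2val
      have hcast : ((∑ j, Complex.normSq (c j) : ℝ) : ℂ) = 0 := by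
        push_cast
        exact hL2val.symm
      have hsum0 : ∑ j, Complex.normSq (c j) = 0 := by exact_mod_cast hcast
      obtain ⟨j⟩ := ‹Nonempty J›
      have := (Finset.sum_eq_zero_iff_of_nonneg
        (fun i _ => Complex.normSq_nonneg (c i))).1 hsum0 j (Finset.mem_univ j)
      exact hc j (Complex.normSq_eq_zero.1 this)
  have hconst : (∀ j, p j = 0) → ∀ t : ℝ, f t = ∑ j, c j := by
    intro hall t
    rw [hfeI t]
    apply Finset.sum_congr rfl
    intro j _
    rw [hall j]
    simp [eI]
  refine ⟨⟨main, fun hall => ⟨∑ j, c j,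
      tendsto_const_nhds.congr fun t => (hconst hall t).symm⟩⟩,
    ⟨fun hall => ⟨∑ j, c j, hconst hall⟩, ?_⟩⟩
  rintro ⟨k, hk⟩
  exact main ⟨k, tendsto_const_nhds.congr fun t => (hk t).symm⟩
end

section
/- Let X be a nonempty set, let d be a positive integer, and let φ₀,…,φ_d : X → ℝ be bounded functions such that there exists ε > 0 with |φ_d(x)| > ε for all x ∈ X. Define φ : X × [0,+∞) → ℝ by φ(x,t) = Σ_{j=0}^d φ_j(x)·t^j. Then the function Φ : X × [0,+∞) → ℂ defined by Φ(x,T) = ∫₀^T e^{iφ(x,t)} dt is bounded; that is, there exists C > 0 such that |∫₀^T e^{iφ(x,t)} dt| ≤ C for all x ∈ X and all T ≥ 0. -/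
open Filter intervalIntegral Finset

private lemma key9 (D : ℕ) (a : ℕ → ℝ) (M ε : ℝ) (hε : 0 < ε) (hM : 0 < M)
    (hb : ∀ j ≤ D + 1, |a j| ≤ M) (hl : ε < a (D+1)) (T : ℝ) (hT : 0 ≤ T) :
    ‖(∫ t in (0:ℝ)..T, Complex.exp (Complex.I *
      ((∑ j ∈ Finset.range (D+2), a j * t ^ j : ℝ) : ℂ)))‖
      ≤ (M*(D+1)^2 + ε)/ε + 3/ε := by
  set t₀ : ℝ := (M*(D+1)^2 + ε)/ε with ht₀def
  have ht₀1 : 1 ≤ t₀ := by rw [ht₀def, le_div_iff₀ hε]; nlinarith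
  have ht₀pos : 0 < t₀ := by linarith
  have hεt₀ : M*(D+1)^2 + ε ≤ ε * t₀ := by
    rw [ht₀def, mul_div_cancel₀ _ hε.ne']
  set f1 : ℝ → ℝ := fun t => ∑ j ∈ Finset.range (D+2), a j * (j * t ^ (j-1)) with hf1def
  set f2 : ℝ → ℝ := fun t => ∑ j ∈ Finset.range (D+2), a j * (j * ((j-1:ℕ) * t ^ (j-1-1))) with hf2def
  set g : ℝ → ℂ := fun t => Complex.exp (Complex.I *
      ((∑ j ∈ Finset.range (D+2), a j * t ^ j : ℝ) : ℂ)) with hgdef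
  have hf1cont : Continuous f1 := by
    apply continuous_finset_sum; intro j _; fun_prop
  have hf2cont : Continuous f2 := by
    apply continuous_finset_sum; intro j _; fun_prop
  have hfsum : Continuous fun t : ℝ => ∑ j ∈ Finset.range (D+2), a j * t ^ j := by
    apply continuous_finset_sum; intro j _; fun_prop
  have hgcont : Continuous g := by
    rw [hgdef]
    exact Complex.continuous_exp.comp (continuous_const.mul (Complex.continuous_ofReal.comp hfsum))
  have hgnorm : ∀ t : ℝ, ‖g t‖ = 1 := by
    intro t
    simp [hgdef, Complex.norm_exp, Complex.mul_re, ← Complex.ofReal_pow]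
  have hf1deriv : ∀ t : ℝ, HasDerivAt (fun s : ℝ => ∑ j ∈ Finset.range (D+2), a j * s ^ j)
      (f1 t) t := by
    intro t
    apply HasDerivAt.fun_sum
    intro j _
    exact (hasDerivAt_pow j t).const_mul (a j)
  have hf2deriv : ∀ t : ℝ, HasDerivAt f1 (f2 t) t := by
    intro t
    apply HasDerivAt.fun_sum
    intro j _
    exact (((hasDerivAt_pow (j-1) t)).const_mul (j:ℝ)).const_mul (a j)
  have hgderiv : ∀ t : ℝ, HasDerivAt g (g t * (Complex.I * (f1 t : ℂ))) t := by
    intro t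
    exact (((hf1deriv t).ofReal_comp).const_mul Complex.I).cexp
  -- lower bound for f1 on [t₀, ∞)
  have hf1lb : ∀ t : ℝ, t₀ ≤ t → ε ≤ f1 t := by
    intro t ht
    have h1t : (1:ℝ) ≤ t := le_trans ht₀1 ht
    have h0t : (0:ℝ) < t := by linarith
    have htD : (1:ℝ) ≤ t ^ D := one_le_pow₀ h1t
    have hεt : M*(D+1)^2 + ε ≤ ε * t := le_trans hεt₀ (by nlinarith)
    have key1 : t * f1 t = ∑ j ∈ Finset.range (D+2), a j * (j * t ^ j) := by
      rw [hf1def, Finset.mul_sum]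
      refine Finset.sum_congr rfl fun j _ => ?_
      cases j with
      | zero => simp
      | succ k => simp [pow_succ]; ring
    have hlow : -((D+1:ℝ) * (M * (D * t^D))) ≤ ∑ j ∈ Finset.range (D+1), a j * (j * t ^ j) := by
      have : ∑ j ∈ Finset.range (D+1), -(M * ((D:ℝ) * t^D)) ≤
          ∑ j ∈ Finset.range (D+1), a j * (j * t ^ j) := by
        refine Finset.sum_le_sum fun j hj => ?_
        have hjle : j ≤ D := Nat.lt_succ_iff.mp (Finset.mem_range.mp hj)
        have hjD : (j:ℝ) ≤ (D:ℝ) := by exact_mod_cast hjle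
        have htj : t ^ j ≤ t ^ D := pow_le_pow_right₀ h1t hjle
        have habs : |a j * (j * t ^ j)| ≤ M * ((D:ℝ) * t^D) := by
          rw [abs_mul]
          have h1 : |a j| ≤ M := hb j (Nat.le_succ_of_le hjle)
          have h2 : |(j:ℝ) * t ^ j| = (j:ℝ) * t ^ j := abs_of_nonneg (by positivity)
          rw [h2]
          have : (j:ℝ) * t ^ j ≤ (D:ℝ) * t ^ D := by
            apply mul_le_mul hjD htj (by positivity) (by positivity)
          exact mul_le_mul h1 this (by positivity) hM.le
        linarith [neg_abs_le (a j * (j * t ^ j))]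
      calc -((D+1:ℝ) * (M * (D * t^D))) = ∑ _j ∈ Finset.range (D+1), -(M * ((D:ℝ) * t^D)) := by
            rw [Finset.sum_const, Finset.card_range, nsmul_eq_mul]; push_cast; ring
        _ ≤ _ := this
    have hlead : ε * (((D:ℝ)+1) * t^(D+1)) ≤ a (D+1) * (((D:ℝ)+1) * t^(D+1)) := by
      apply mul_le_mul hl.le le_rfl (by positivity)
      linarith
    have hsum : t * f1 t ≥ ε * (((D:ℝ)+1) * t^(D+1)) - ((D+1:ℝ) * (M * (D * t^D))) := by
      rw [key1, Finset.sum_range_succ]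
      push_cast
      linarith
    have hpow : t^(D+1) = t^D * t := pow_succ t D
    rw [hpow] at hsum
    have h2 : M*((D:ℝ)+1) ≤ ε*t := by
      nlinarith [mul_nonneg (mul_nonneg hM.le (show (0:ℝ) ≤ (D:ℝ)+1 by positivity))
        (Nat.cast_nonneg (α := ℝ) D)]
    have h1' : 0 ≤ ε*t*(t^D - 1) := mul_nonneg (by positivity) (by linarith)
    have h3 : 0 ≤ t^D * ((D:ℝ)*(ε*t - M*((D:ℝ)+1))) := by
      apply mul_nonneg (by positivity)
      exact mul_nonneg (Nat.cast_nonneg _) (by linarith)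
    have hfin : ε * t ≤ t * f1 t := by nlinarith [h1', h3]
    exact le_of_mul_le_mul_left (by linarith) h0t
  -- nonnegativity of f2 on [t₀, ∞)
  have hf2nn : ∀ t : ℝ, t₀ ≤ t → 0 ≤ f2 t := by
    intro t ht
    have h1t : (1:ℝ) ≤ t := le_trans ht₀1 ht
    have h0t : (0:ℝ) < t := by linarith
    have htD : (1:ℝ) ≤ t ^ D := one_le_pow₀ h1t
    have hεt : M*(D+1)^2 + ε ≤ ε * t := le_trans hεt₀ (by nlinarith)
    have key2 : t^2 * f2 t = ∑ j ∈ Finset.range (D+2), a j * (j * ((j-1:ℕ) * t ^ j)) := by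
      rw [hf2def, Finset.mul_sum]
      refine Finset.sum_congr rfl fun j _ => ?_
      match j with
      | 0 => simp
      | 1 => simp
      | (k+2) => simp [pow_succ]; ring
    have hlow : -((D+1:ℝ) * (M * ((D:ℝ) * ((D:ℝ) * t^D)))) ≤
        ∑ j ∈ Finset.range (D+1), a j * (j * ((j-1:ℕ) * t ^ j)) := by
      have : ∑ j ∈ Finset.range (D+1), -(M * ((D:ℝ) * ((D:ℝ) * t^D))) ≤
          ∑ j ∈ Finset.range (D+1), a j * (j * ((j-1:ℕ) * t ^ j)) := by
        refine Finset.sum_le_sum fun j hj => ?_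
        have hjle : j ≤ D := Nat.lt_succ_iff.mp (Finset.mem_range.mp hj)
        have hjD : (j:ℝ) ≤ (D:ℝ) := by exact_mod_cast hjle
        have hj1D : ((j-1:ℕ):ℝ) ≤ (D:ℝ) := by exact_mod_cast le_trans (Nat.sub_le j 1) hjle
        have htj : t ^ j ≤ t ^ D := pow_le_pow_right₀ h1t hjle
        have habs : |a j * (j * ((j-1:ℕ) * t ^ j))| ≤ M * ((D:ℝ) * ((D:ℝ) * t^D)) := by
          rw [abs_mul]
          have h1 : |a j| ≤ M := hb j (Nat.le_succ_of_le hjle)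
          have h2 : |(j:ℝ) * (((j-1:ℕ):ℝ) * t ^ j)| = (j:ℝ) * (((j-1:ℕ):ℝ) * t ^ j) :=
            abs_of_nonneg (by positivity)
          rw [h2]
          have : (j:ℝ) * (((j-1:ℕ):ℝ) * t ^ j) ≤ (D:ℝ) * ((D:ℝ) * t ^ D) := by
            apply mul_le_mul hjD (mul_le_mul hj1D htj (by positivity) (by positivity))
              (by positivity) (by positivity)
          exact mul_le_mul h1 this (by positivity) hM.le
        linarith [neg_abs_le (a j * (j * ((j-1:ℕ) * t ^ j)))]
      calc -((D+1:ℝ) * (M * ((D:ℝ) * ((D:ℝ) * t^D))))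
            = ∑ _j ∈ Finset.range (D+1), -(M * ((D:ℝ) * ((D:ℝ) * t^D))) := by
            rw [Finset.sum_const, Finset.card_range, nsmul_eq_mul]; push_cast; ring
        _ ≤ _ := this
    have hlead : ε * (((D:ℝ)+1) * ((D:ℝ) * t^(D+1))) ≤
        a (D+1) * (((D:ℝ)+1) * ((D:ℝ) * t^(D+1))) := by
      apply mul_le_mul hl.le le_rfl (by positivity)
      linarith
    have hsum : t^2 * f2 t ≥ ε * (((D:ℝ)+1) * ((D:ℝ) * t^(D+1)))
        - ((D+1:ℝ) * (M * ((D:ℝ) * ((D:ℝ) * t^D)))) := by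
      rw [key2, Finset.sum_range_succ]
      simp only [Nat.add_sub_cancel]
      push_cast
      linarith
    have hpow : t^(D+1) = t^D * t := pow_succ t D
    rw [hpow] at hsum
    have hD2 : M*(D:ℝ) ≤ ε*t := by
      nlinarith [mul_nonneg hM.le (Nat.cast_nonneg (α := ℝ) D),
        mul_nonneg hM.le (sq_nonneg (D:ℝ))]
    have h3 : 0 ≤ (((D:ℝ)+1)*((D:ℝ)*(t^D*(ε*t - M*(D:ℝ))))) := by
      apply mul_nonneg (by positivity)
      apply mul_nonneg (Nat.cast_nonneg _)
      exact mul_nonneg (by positivity) (by linarith)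
    have h4 : (0:ℝ) ≤ t^2 * f2 t := by linarith [h3]
    have h5 := div_nonneg h4 (by positivity : (0:ℝ) ≤ t^2)
    rwa [mul_div_cancel_left₀ _ (by positivity : (t:ℝ)^2 ≠ 0)] at h5
  -- trivial bound
  have hbdd1 : ∀ p q : ℝ, ‖∫ t in p..q, g t‖ ≤ |q - p| := by
    intro p q
    calc ‖∫ t in p..q, g t‖ ≤ 1 * |q - p| :=
          intervalIntegral.norm_integral_le_of_norm_le_const (fun x _ => (hgnorm x).le)
      _ = |q - p| := one_mul _
  have h3ε : 0 < 3/ε := by positivity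
  rcases le_or_gt T t₀ with hTt | hTt
  · calc ‖∫ t in (0:ℝ)..T, g t‖ ≤ |T - 0| := hbdd1 0 T
      _ = T := by rw [sub_zero, abs_of_nonneg hT]
      _ ≤ t₀ + 3/ε := by linarith
  · set u : ℝ → ℂ := fun t => (Complex.I * (f1 t : ℂ))⁻¹ with hudef
    set u' : ℝ → ℂ := fun t => -((Complex.I * (f1 t : ℂ))^2)⁻¹ * (Complex.I * (f2 t : ℂ)) with hu'def
    have huIcc : Set.uIcc t₀ T = Set.Icc t₀ T := Set.uIcc_of_le hTt.le
    have hmem : ∀ x ∈ Set.uIcc t₀ T, t₀ ≤ x := by rw [huIcc]; exact fun x hx => hx.1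
    have hne : ∀ x : ℝ, t₀ ≤ x → Complex.I * (f1 x : ℂ) ≠ 0 := by
      intro x hx
      have h1 : f1 x ≠ 0 := by have := hf1lb x hx; linarith
      exact mul_ne_zero Complex.I_ne_zero (Complex.ofReal_ne_zero.mpr h1)
    have huderiv : ∀ x ∈ Set.uIcc t₀ T, HasDerivAt u (u' x) x := by
      intro x hx
      have hc : HasDerivAt (fun t : ℝ => Complex.I * ((f1 t : ℝ) : ℂ))
          (Complex.I * (f2 x : ℂ)) x := ((hf2deriv x).ofReal_comp).const_mul Complex.I
      have hinv := (hasDerivAt_inv (hne x (hmem x hx))).comp x hc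
      simpa [hudef, hu'def, Function.comp_def] using hinv
    have hu'cont : ContinuousOn u' (Set.uIcc t₀ T) := by
      apply ContinuousOn.mul
      · apply ContinuousOn.neg
        apply ContinuousOn.inv₀
        · exact ((continuous_const.mul
            (Complex.continuous_ofReal.comp hf1cont)).pow 2).continuousOn
        · intro x hx; exact pow_ne_zero 2 (hne x (hmem x hx))
      · exact (continuous_const.mul (Complex.continuous_ofReal.comp hf2cont)).continuousOn
    have hu'int : IntervalIntegrable u' MeasureTheory.volume t₀ T := hu'cont.intervalIntegrable
    have hv'int : IntervalIntegrable (fun t => g t * (Complex.I * (f1 t:ℂ)))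
        MeasureTheory.volume t₀ T := by
      apply Continuous.intervalIntegrable
      exact hgcont.mul (continuous_const.mul (Complex.continuous_ofReal.comp hf1cont))
    have hibp := intervalIntegral.integral_mul_deriv_eq_deriv_mul
      huderiv (fun x _ => hgderiv x) hu'int hv'int
    have hcongr : ∫ x in t₀..T, u x * (g x * (Complex.I * (f1 x:ℂ))) = ∫ x in t₀..T, g x := by
      apply intervalIntegral.integral_congr
      intro x hx
      have h := hne x (hmem x hx)
      show u x * (g x * (Complex.I * (f1 x:ℂ))) = g x
      rw [hudef]
      simp only []
      rw [mul_comm (g x) (Complex.I * (f1 x:ℂ)), ← mul_assoc, inv_mul_cancel₀ h, one_mul]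
    have hibp' : ∫ x in t₀..T, g x
        = u T * g T - u t₀ * g t₀ - ∫ x in t₀..T, u' x * g x := by
      rw [← hcongr, hibp]
    have hunorm : ∀ x : ℝ, t₀ ≤ x → ‖u x‖ ≤ ε⁻¹ := by
      intro x hx
      have h1 : ε ≤ f1 x := hf1lb x hx
      simp only [hudef, norm_inv, norm_mul, Complex.norm_I,
        Complex.norm_real, Real.norm_eq_abs, one_mul]
      rw [abs_of_nonneg (by linarith : (0:ℝ) ≤ f1 x)]
      exact inv_anti₀ hε h1
    have hnormint : ‖∫ x in t₀..T, u' x * g x‖ ≤ ε⁻¹ := by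
      have hle : ‖∫ x in t₀..T, u' x * g x‖ ≤ ∫ x in t₀..T, ‖u' x * g x‖ :=
        intervalIntegral.norm_integral_le_integral_norm hTt.le
      have heqn : ∫ x in t₀..T, ‖u' x * g x‖ = ∫ x in t₀..T, f2 x / (f1 x)^2 := by
        apply intervalIntegral.integral_congr
        intro x hx
        have hx0 := hmem x hx
        have h1 : ε ≤ f1 x := hf1lb x hx0
        have h2 : 0 ≤ f2 x := hf2nn x hx0
        show ‖u' x * g x‖ = f2 x / (f1 x)^2
        simp only [hu'def, norm_mul, norm_neg, norm_inv, norm_pow, hgnorm, mul_one,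
          Complex.norm_I, Complex.norm_real, Real.norm_eq_abs, one_mul]
        rw [abs_of_nonneg h2, abs_of_nonneg (by linarith : (0:ℝ) ≤ f1 x)]
        ring
      have hftc : ∫ x in t₀..T, f2 x / (f1 x)^2 = -(f1 T)⁻¹ - -(f1 t₀)⁻¹ := by
        apply intervalIntegral.integral_eq_sub_of_hasDerivAt
        · intro x hx
          have h1 : ε ≤ f1 x := hf1lb x (hmem x hx)
          have hne1 : f1 x ≠ 0 := by intro h; rw [h] at h1; linarith
          simpa [neg_div] using ((hf2deriv x).fun_inv hne1).fun_neg
        · apply ContinuousOn.intervalIntegrable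
          apply ContinuousOn.div hf2cont.continuousOn (hf1cont.pow 2).continuousOn
          intro x hx
          have h1 : ε ≤ f1 x := hf1lb x (hmem x hx)
          exact pow_ne_zero 2 (by intro h; rw [h] at h1; linarith)
      have hfT : 0 < f1 T := lt_of_lt_of_le hε (hf1lb T hTt.le)
      have hfT' : 0 < (f1 T)⁻¹ := by positivity
      calc ‖∫ x in t₀..T, u' x * g x‖ ≤ ∫ x in t₀..T, ‖u' x * g x‖ := hle
        _ = -(f1 T)⁻¹ - -(f1 t₀)⁻¹ := by rw [heqn, hftc]
        _ ≤ (f1 t₀)⁻¹ := by linarith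
        _ ≤ ε⁻¹ := inv_anti₀ hε (hf1lb t₀ le_rfl)
    have hsplitint : ∫ t in (0:ℝ)..T, g t = (∫ t in (0:ℝ)..t₀, g t) + ∫ t in t₀..T, g t :=
      (intervalIntegral.integral_add_adjacent_intervals
        (hgcont.intervalIntegrable _ _) (hgcont.intervalIntegrable _ _)).symm
    have hb1 : ‖∫ t in (0:ℝ)..t₀, g t‖ ≤ t₀ := by
      have := hbdd1 0 t₀
      rwa [sub_zero, abs_of_nonneg ht₀pos.le] at this
    have hb2 : ‖∫ t in t₀..T, g t‖ ≤ 3 * ε⁻¹ := by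
      rw [hibp']
      have e1 : ‖u T * g T‖ ≤ ε⁻¹ := by
        rw [norm_mul, hgnorm, mul_one]; exact hunorm T hTt.le
      have e2 : ‖u t₀ * g t₀‖ ≤ ε⁻¹ := by
        rw [norm_mul, hgnorm, mul_one]; exact hunorm t₀ le_rfl
      calc ‖u T * g T - u t₀ * g t₀ - ∫ x in t₀..T, u' x * g x‖
          ≤ ‖u T * g T - u t₀ * g t₀‖ + ‖∫ x in t₀..T, u' x * g x‖ := norm_sub_le _ _
        _ ≤ (‖u T * g T‖ + ‖u t₀ * g t₀‖) + ε⁻¹ := add_le_add (norm_sub_le _ _) hnormint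
        _ ≤ (ε⁻¹ + ε⁻¹) + ε⁻¹ := by linarith
        _ = 3 * ε⁻¹ := by ring
    calc ‖∫ t in (0:ℝ)..T, g t‖
        = ‖(∫ t in (0:ℝ)..t₀, g t) + ∫ t in t₀..T, g t‖ := by rw [← hsplitint]
      _ ≤ ‖∫ t in (0:ℝ)..t₀, g t‖ + ‖∫ t in t₀..T, g t‖ := norm_add_le _ _
      _ ≤ t₀ + 3 * ε⁻¹ := add_le_add hb1 hb2
      _ = t₀ + 3 / ε := by rw [div_eq_mul_inv]

private lemma conj_int (f : ℝ → ℂ) (p q : ℝ) :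
    ∫ t in p..q, (starRingEnd ℂ) (f t) = (starRingEnd ℂ) (∫ t in p..q, f t) := by
  simp [intervalIntegral, ← integral_conj]

theorem stmt9 {X : Type*} [Nonempty X] (d : ℕ) (hd : 0 < d) (φ : ℕ → X → ℝ)
    (hbdd : ∀ j ≤ d, ∃ M : ℝ, ∀ x : X, |φ j x| ≤ M)
    (hlead : ∃ ε > (0 : ℝ), ∀ x : X, ε < |φ d x|) :
    ∃ C > (0 : ℝ), ∀ x : X, ∀ T : ℝ, 0 ≤ T →
      ‖(∫ t in (0 : ℝ)..T,
        Complex.exp (Complex.I * ((∑ j ∈ Finset.range (d + 1), φ j x * t ^ j : ℝ) : ℂ)))‖ ≤ C := by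
  obtain ⟨ε, hε, hl⟩ := hlead
  -- a uniform bound on the coefficients
  have hM : ∃ M : ℝ, 0 < M ∧ ∀ j ≤ d, ∀ x : X, |φ j x| ≤ M := by
    have h : ∀ j : ℕ, ∃ M : ℝ, ∀ x : X, j ≤ d → |φ j x| ≤ M := by
      intro j
      rcases le_or_gt j d with h | h
      · obtain ⟨M, hM⟩ := hbdd j h
        exact ⟨M, fun x _ => hM x⟩
      · exact ⟨0, fun x hx => absurd hx (by omega)⟩
    choose Ms hMs using h
    refine ⟨1 + ∑ j ∈ Finset.range (d+1), |Ms j|, by positivity, fun j hj x => ?_⟩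
    have h1 : |φ j x| ≤ Ms j := hMs j x hj
    have h2 : Ms j ≤ |Ms j| := le_abs_self _
    have h3 : |Ms j| ≤ ∑ i ∈ Finset.range (d+1), |Ms i| :=
      Finset.single_le_sum (f := fun i => |Ms i|) (fun i _ => abs_nonneg _)
        (Finset.mem_range.mpr (by omega))
    linarith
  obtain ⟨M, hMpos, hMb⟩ := hM
  obtain ⟨D, rfl⟩ : ∃ D : ℕ, d = D + 1 := ⟨d - 1, (Nat.succ_pred_eq_of_pos hd).symm⟩
  refine ⟨(M*(D+1)^2 + ε)/ε + 3/ε, by positivity, fun x T hT => ?_⟩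
  rcases lt_abs.mp (hl x) with h | h
  · exact key9 D (fun j => φ j x) M ε hε hMpos (fun j hj => hMb j hj x) h T hT
  · have hkey := key9 D (fun j => -φ j x) M ε hε hMpos
      (fun j hj => by rw [abs_neg]; exact hMb j hj x) (by simpa using h) T hT
    have heq : ∀ t : ℝ, Complex.exp (Complex.I *
        ((∑ j ∈ Finset.range (D+2), -φ j x * t ^ j : ℝ) : ℂ))
        = (starRingEnd ℂ) (Complex.exp (Complex.I *
          ((∑ j ∈ Finset.range (D+2), φ j x * t ^ j : ℝ) : ℂ))) := by
      intro t
      rw [← Complex.exp_conj]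
      congr 1
      have hs : (∑ j ∈ Finset.range (D+2), -φ j x * t ^ j)
          = -(∑ j ∈ Finset.range (D+2), φ j x * t ^ j) := by
        rw [← Finset.sum_neg_distrib]
        exact Finset.sum_congr rfl fun j _ => by ring
      rw [hs, map_mul, Complex.conj_I, Complex.conj_ofReal]
      push_cast
      ring
    rw [show (D + 1 + 1) = D + 2 from rfl] at *
    calc ‖(∫ t in (0:ℝ)..T,
          Complex.exp (Complex.I * ((∑ j ∈ Finset.range (D+2), φ j x * t ^ j : ℝ) : ℂ)))‖
        = ‖((starRingEnd ℂ) (∫ t in (0:ℝ)..T,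
            Complex.exp (Complex.I * ((∑ j ∈ Finset.range (D+2), φ j x * t ^ j : ℝ) : ℂ))))‖ := by
          rw [Complex.norm_conj]
      _ = ‖(∫ t in (0:ℝ)..T, Complex.exp (Complex.I *
            ((∑ j ∈ Finset.range (D+2), -φ j x * t ^ j : ℝ) : ℂ)))‖ := by
          rw [← conj_int]
          congr 1
          exact intervalIntegral.integral_congr fun s _ => (heq s).symm
      _ ≤ (M*(D+1)^2 + ε)/ε + 3/ε := hkey
end
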